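/- arXiv:1311.2722 — 5 statements merged into one kernel-verified Lean document; each statement's English description precedes it below -/
import Mathlib

section
/- If u₁ < u₂ in [a,ū] belong to the same shock interval of the convex envelope of f on [a,ū] (i.e., the envelope is strictly below f on an open interval containing both), then they belong to the same shock interval of the convex envelope of f on [a,b]. -/
open Set

/-- Convex envelope of `f` on `[a,b]`: pointwise supremum of all convex functions
on `[a,b]` lying below `f`. -/
noncomputable def convEnv (f : ℝ → ℝ) (a b : ℝ) (u : ℝ) : ℝ :=
  sSup {y : ℝ | ∃ g : ℝ → ℝ, ConvexOn ℝ (Set.Icc a b) g ∧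
    (∀ x ∈ Set.Icc a b, g x ≤ f x) ∧ g u = y}

lemma convEnv_mono_domain (f : ℝ → ℝ) (a b u₀ u : ℝ) (hf : Continuous f)
    (hab : a ≤ b) (hb : u₀ ≤ b) (hu : u ∈ Set.Icc a u₀) :
    convEnv f a b u ≤ convEnv f a u₀ u := by
  apply csSup_le_csSup
  · exact ⟨f u, fun y ⟨g, hg, hgf, hgu⟩ => hgu ▸ hgf u hu⟩
  · obtain ⟨x₀, hx₀, hmin⟩ := isCompact_Icc.exists_isMinOn ⟨a, le_refl a, hab⟩
      hf.continuousOn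
    exact ⟨f x₀, fun _ => f x₀, convexOn_const _ (convex_Icc a b),
      fun x hx => hmin hx, rfl⟩
  · rintro y ⟨g, hg, hgf, hgu⟩
    exact ⟨g, hg.subset (Set.Icc_subset_Icc_right hb) (convex_Icc a u₀),
      fun x hx => hgf x (Set.Icc_subset_Icc_right hb hx), hgu⟩

theorem same_shock_interval_of_larger_domain (f : ℝ → ℝ) (a b u₀ u₁ u₂ : ℝ)
    (hf : Continuous f) (h1 : a < u₀) (h2 : u₀ < b)
    (hu₁ : u₁ ∈ Set.Icc a u₀) (hu₂ : u₂ ∈ Set.Icc a u₀) (h12 : u₁ < u₂)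
    (hshock : ∃ c d : ℝ, Set.Ioo c d ⊆ Set.Icc a u₀ ∧
      u₁ ∈ Set.Ioo c d ∧ u₂ ∈ Set.Ioo c d ∧
      ∀ u ∈ Set.Ioo c d, convEnv f a u₀ u < f u) :
    ∃ c d : ℝ, Set.Ioo c d ⊆ Set.Icc a b ∧
      u₁ ∈ Set.Ioo c d ∧ u₂ ∈ Set.Ioo c d ∧
      ∀ u ∈ Set.Ioo c d, convEnv f a b u < f u := by
  obtain ⟨c, d, hsub, hc1, hc2, hlt⟩ := hshock
  refine ⟨c, d, hsub.trans (Set.Icc_subset_Icc_right h2.le), hc1, hc2, fun u hu => ?_⟩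
  exact lt_of_le_of_lt
    (convEnv_mono_domain f a b u₀ u hf (h1.le.trans h2.le) h2.le (hsub hu))
    (hlt u hu)
end

section
/- For f of class C^{1,1} and a < ū < b, the left derivative of the convex envelope of f on [a,ū] at ū minus the derivative of the convex envelope of f on [a,b] at ū is at most Lip(f')·(b − ū). -/
open Set

namespace CEaux

variable {f : ℝ → ℝ} {L : NNReal}

lemma lip_abs (hL : LipschitzWith L (deriv f)) (x y : ℝ) :
    |deriv f x - deriv f y| ≤ (L : ℝ) * |x - y| := by
  have := hL.dist_le_mul x y
  simpa [Real.dist_eq] using this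

lemma taylor_low (hf : Differentiable ℝ f) (hL : LipschitzWith L (deriv f)) (x z : ℝ) :
    f x + deriv f x * (z - x) - (L : ℝ)/2 * (z - x)^2 ≤ f z := by
  set h : ℝ → ℝ := fun w => f w - deriv f x * w + (L : ℝ)/2 * (w - x)^2 with hh
  have hdiff : Differentiable ℝ h := by
    apply Differentiable.add
    · exact hf.sub ((differentiable_id.const_mul _))
    · apply Differentiable.const_mul
      exact (differentiable_id.sub_const x).pow 2
  have hderiv : ∀ w, deriv h w = deriv f w - deriv f x + (L : ℝ) * (w - x) := by
    intro w
    have h1 : HasDerivAt (fun w : ℝ => (w - x)^2) (2 * (w - x)) w := by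
      have := ((hasDerivAt_id w).sub_const x).fun_pow 2
      simpa using this
    have h2 : HasDerivAt h (deriv f w - deriv f x * 1 + (L : ℝ)/2 * (2 * (w - x))) w := by
      have := (((hf w).hasDerivAt.fun_sub ((hasDerivAt_id w).const_mul (deriv f x))).fun_add
        (h1.const_mul ((L : ℝ)/2)))
      simpa [hh] using this
    rw [h2.deriv]; ring
  have hmono : MonotoneOn h (Ici x) := by
    apply monotoneOn_of_deriv_nonneg (convex_Ici x) hdiff.continuous.continuousOn
      hdiff.differentiableOn
    intro w hw
    rw [hderiv]
    rw [interior_Ici] at hw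
    have := abs_le.1 (lip_abs hL w x)
    have hxw : |w - x| = w - x := abs_of_pos (by simpa using hw)
    rw [hxw] at this
    linarith [this.1]
  have hanti : AntitoneOn h (Iic x) := by
    apply antitoneOn_of_deriv_nonpos (convex_Iic x) hdiff.continuous.continuousOn
      hdiff.differentiableOn
    intro w hw
    rw [hderiv]
    rw [interior_Iic] at hw
    have := abs_le.1 (lip_abs hL w x)
    have hxw : |w - x| = x - w := by
      rw [abs_of_neg (by simpa using sub_neg.2 (mem_Iio.1 hw))]; ring
    rw [hxw] at this
    linarith [this.2]
  have hx : h x = f x - deriv f x * x := by simp [hh]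
  rcases le_total x z with hxz | hxz
  · have := hmono (self_mem_Ici) (mem_Ici.2 hxz) hxz
    rw [hx] at this
    simp only [hh] at this
    nlinarith [this]
  · have := hanti (mem_Iic.2 hxz) (self_mem_Iic) hxz
    rw [hx] at this
    simp only [hh] at this
    nlinarith [this]

lemma taylor_up (hf : Differentiable ℝ f) (hL : LipschitzWith L (deriv f)) (x z : ℝ) :
    f z ≤ f x + deriv f x * (z - x) + (3*(L : ℝ)/2) * (z - x)^2 := by
  have h0 := taylor_low hf hL z x
  have hle : deriv f z * (z - x) ≤ deriv f x * (z - x) + (L : ℝ) * (z - x)^2 := by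
    have habs := abs_le.1 (lip_abs hL z x)
    rcases le_total x z with hxz | hxz
    · have h1 : |z - x| = z - x := abs_of_nonneg (by linarith)
      rw [h1] at habs
      nlinarith [habs.2, sub_nonneg.2 hxz]
    · have h1 : |z - x| = x - z := by
        rw [abs_of_nonpos (by linarith)]; ring
      rw [h1] at habs
      nlinarith [habs.1, sub_nonneg.2 hxz]
  nlinarith [h0, hle]


/-- Admissibility of `g` as convex minorant of `f` on `[a,d]`. -/
def Adm (f : ℝ → ℝ) (a d : ℝ) (g : ℝ → ℝ) : Prop :=
  ConvexOn ℝ (Set.Icc a d) g ∧ ∀ x ∈ Set.Icc a d, g x ≤ f x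

lemma envSet_eq (f : ℝ → ℝ) (a d u : ℝ) :
    {y : ℝ | ∃ g : ℝ → ℝ, ConvexOn ℝ (Set.Icc a d) g ∧
      (∀ x ∈ Set.Icc a d, g x ≤ f x) ∧ g u = y} = {y : ℝ | ∃ g, Adm f a d g ∧ g u = y} := by
  ext y; constructor
  · rintro ⟨g, h1, h2, h3⟩; exact ⟨g, ⟨h1, h2⟩, h3⟩
  · rintro ⟨g, ⟨h1, h2⟩, h3⟩; exact ⟨g, h1, h2, h3⟩

lemma convEnv_eq (f : ℝ → ℝ) (a d u : ℝ) :
    convEnv f a d u = sSup {y : ℝ | ∃ g, Adm f a d g ∧ g u = y} := by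
  rw [convEnv, envSet_eq]

variable {a d : ℝ}

lemma bddAbove_envSet {u : ℝ} (hu : u ∈ Icc a d) :
    BddAbove {y : ℝ | ∃ g, Adm f a d g ∧ g u = y} := by
  refine ⟨f u, ?_⟩
  rintro y ⟨g, hg, rfl⟩
  exact hg.2 u hu

lemma le_env {g : ℝ → ℝ} (hg : Adm f a d g) {u : ℝ} (hu : u ∈ Icc a d) :
    g u ≤ convEnv f a d u := by
  rw [convEnv_eq]
  exact le_csSup (bddAbove_envSet hu) ⟨g, hg, rfl⟩

lemma env_le {g₀ : ℝ → ℝ} (hg₀ : Adm f a d g₀) {u : ℝ} (hu : u ∈ Icc a d) :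
    convEnv f a d u ≤ f u := by
  rw [convEnv_eq]
  refine csSup_le ⟨g₀ u, g₀, hg₀, rfl⟩ ?_
  rintro y ⟨g, hg, rfl⟩
  exact hg.2 u hu

lemma line_convexOn (s : Set ℝ) (hs : Convex ℝ s) (m q : ℝ) :
    ConvexOn ℝ s (fun w => m * w + q) := by
  refine ⟨hs, ?_⟩
  intro x _ y _ α β hα hβ hαβ
  simp only [smul_eq_mul]
  have : α * (m * x + q) + β * (m * y + q) = m * (α * x + β * y) + (α + β) * q := by ring
  rw [this, hαβ]; simp

lemma line_adm {m q : ℝ} (h : ∀ w ∈ Icc a d, m * w + q ≤ f w) :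
    Adm f a d (fun w => m * w + q) :=
  ⟨line_convexOn _ (convex_Icc a d) m q, h⟩

lemma env_convexOn {g₀ : ℝ → ℝ} (hg₀ : Adm f a d g₀) :
    ConvexOn ℝ (Icc a d) (convEnv f a d) := by
  refine ⟨convex_Icc a d, ?_⟩
  intro x hx y hy α β hα hβ hαβ
  have hz : α • x + β • y ∈ Icc a d := (convex_Icc a d) hx hy hα hβ hαβ
  rw [convEnv_eq]
  refine csSup_le ⟨g₀ (α • x + β • y), g₀, hg₀, rfl⟩ ?_
  rintro y' ⟨g, hg, rfl⟩
  calc g (α • x + β • y) ≤ α • g x + β • g y := hg.1.2 hx hy hα hβ hαβ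
    _ ≤ α • convEnv f a d x + β • convEnv f a d y := by
        simp only [smul_eq_mul]
        gcongr
        · exact le_env hg hx
        · exact le_env hg hy

/-- A line below `f` on `[a,d]`, based at the left endpoint. -/
lemma exists_adm (hf : Differentiable ℝ f) (hL : LipschitzWith L (deriv f)) (had : a ≤ d) :
    Adm f a d (fun w => deriv f a * w + (f a - deriv f a * a - (L : ℝ)/2 * (d - a)^2)) := by
  apply line_adm
  intro w hw
  have ht := taylor_low hf hL a w
  have h1 : (w - a)^2 ≤ (d - a)^2 := by nlinarith [hw.1, hw.2]
  nlinarith [ht, mul_nonneg (NNReal.coe_nonneg L) (sub_nonneg.2 h1)]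

/-- The tangent-type line at the right endpoint `d`, with slope
`K = f' d + L/2 (d - a)`, lies below `f` on `[a,d]`; consequently the envelope
lies above it. -/
lemma env_ge_K_line (hf : Differentiable ℝ f) (hL : LipschitzWith L (deriv f)) (had : a ≤ d)
    {w : ℝ} (hw : w ∈ Icc a d) :
    f d + (deriv f d + (L : ℝ)/2 * (d - a)) * (w - d) ≤ convEnv f a d w := by
  have hadm : Adm f a d (fun w => (deriv f d + (L : ℝ)/2 * (d - a)) * w +
      (f d - (deriv f d + (L : ℝ)/2 * (d - a)) * d)) := by
    apply line_adm
    intro w hw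
    have ht := taylor_low hf hL d w
    have h1 : a ≤ w := hw.1
    have h2 : w ≤ d := hw.2
    nlinarith [ht, mul_nonneg (NNReal.coe_nonneg L) (mul_nonneg (sub_nonneg.2 h2) (sub_nonneg.2 h1))]
  have := le_env hadm hw
  linarith [this]

lemma env_right_endpoint (hf : Differentiable ℝ f) (hL : LipschitzWith L (deriv f))
    (had : a ≤ d) : convEnv f a d d = f d := by
  have h1 := env_ge_K_line hf hL had (right_mem_Icc.2 had)
  have h2 := env_le (exists_adm hf hL had) (right_mem_Icc.2 had)
  simp at h1
  linarith


lemma exists_min_line (hf : Differentiable ℝ f) (hab : a ≤ d) (σ : ℝ) :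
    ∃ c ∈ Icc a d, ∀ w ∈ Icc a d, f c + σ * (w - c) ≤ f w := by
  obtain ⟨c, hc, hmin⟩ := isCompact_Icc.exists_isMinOn (nonempty_Icc.2 hab)
    ((hf.continuous.sub (continuous_const.mul continuous_id)).continuousOn :
      ContinuousOn (fun w => f w - σ * w) (Icc a d))
  refine ⟨c, hc, fun w hw => ?_⟩
  have := isMinOn_iff.1 hmin w hw
  simp only [Pi.sub_apply, Pi.mul_apply, id] at this
  linarith

end CEaux


open CEaux Filter in
set_option maxHeartbeats 2000000 in
theorem convEnv_leftDeriv_cancellation_estimate (f : ℝ → ℝ) (a b u₀ : ℝ)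
    (L : NNReal) (hf : Differentiable ℝ f) (hL : LipschitzWith L (deriv f))
    (h1 : a < u₀) (h2 : u₀ < b) :
    derivWithin (convEnv f a u₀) (Set.Iic u₀) u₀ -
        derivWithin (convEnv f a b) (Set.Icc a b) u₀ ≤ (L : ℝ) * (b - u₀) := by
  have hab : a < b := h1.trans h2
  have hau : a ≤ u₀ := h1.le
  have hu₀I : u₀ ∈ Icc a b := ⟨h1.le, h2.le⟩
  have hLpos : (0:ℝ) ≤ (L:ℝ) := NNReal.coe_nonneg L
  set E₁ : ℝ → ℝ := convEnv f a u₀ with hE₁def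
  set E₂ : ℝ → ℝ := convEnv f a b with hE₂def
  have hadm₁ := exists_adm hf hL hau
  have hadm₂ := exists_adm hf hL hab.le
  have hconv₁ : ConvexOn ℝ (Icc a u₀) E₁ := env_convexOn hadm₁
  have hconv₂ : ConvexOn ℝ (Icc a b) E₂ := env_convexOn hadm₂
  have hE₁u₀ : E₁ u₀ = f u₀ := env_right_endpoint hf hL hau
  have hE₂le : ∀ w ∈ Icc a b, E₂ w ≤ f w := fun w hw => env_le hadm₂ hw
  have hE₁le : ∀ w ∈ Icc a u₀, E₁ w ≤ f w := fun w hw => env_le hadm₁ hw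
  have hsub : Icc a u₀ ⊆ Icc a b := Icc_subset_Icc le_rfl h2.le
  have hE₂E₁ : ∀ w ∈ Icc a u₀, E₂ w ≤ E₁ w := by
    intro w hw
    exact le_env ⟨hconv₂.subset hsub (convex_Icc _ _),
      fun x hx => hE₂le x (hsub hx)⟩ hw
  -- left slopes of E₁ at u₀
  set sl₁ : ℝ → ℝ := fun t => (E₁ t - E₁ u₀) / (t - u₀) with hsl₁def
  set S₁ : Set ℝ := sl₁ '' (Ico a u₀) with hS₁def
  have hS₁ne : S₁.Nonempty := ⟨sl₁ a, a, ⟨le_rfl, h1⟩, rfl⟩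
  have hKbd : ∀ t ∈ Ico a u₀, sl₁ t ≤ deriv f u₀ + (L:ℝ)/2 * (u₀ - a) := by
    intro t ht
    have hlt : t - u₀ < 0 := sub_neg.2 ht.2
    rw [hsl₁def]
    simp only
    rw [div_le_iff_of_neg hlt]
    have := env_ge_K_line hf hL hau (⟨ht.1, ht.2.le⟩ : t ∈ Icc a u₀)
    rw [hE₁u₀]
    linarith
  have hS₁bdd : BddAbove S₁ := by
    refine ⟨deriv f u₀ + (L:ℝ)/2 * (u₀ - a), ?_⟩
    rintro s ⟨t, ht, rfl⟩
    exact hKbd t ht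
  set D : ℝ := sSup S₁ with hDdef
  have hsl₁mono : ∀ s ∈ Ico a u₀, ∀ t ∈ Ico a u₀, s ≤ t → sl₁ s ≤ sl₁ t := by
    intro s hs t ht hst
    exact hconv₁.secant_mono (right_mem_Icc.2 hau) ⟨hs.1, hs.2.le⟩ ⟨ht.1, ht.2.le⟩
      (ne_of_lt hs.2) (ne_of_lt ht.2) hst
  have hD : HasDerivWithinAt E₁ D (Iic u₀) u₀ := by
    rw [hasDerivWithinAt_iff_isLittleO, Asymptotics.isLittleO_iff]
    intro c hc
    obtain ⟨s, hsmem, hslt⟩ : ∃ s ∈ S₁, D - c < s :=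
      exists_lt_of_lt_csSup hS₁ne (by linarith)
    obtain ⟨t₀, ht₀, rfl⟩ := hsmem
    have hmem : Ioi t₀ ∩ Iic u₀ ∈ nhdsWithin u₀ (Iic u₀) :=
      Filter.inter_mem (mem_nhdsWithin_of_mem_nhds (Ioi_mem_nhds ht₀.2)) self_mem_nhdsWithin
    filter_upwards [hmem] with w hw
    rcases eq_or_lt_of_le (mem_Iic.1 hw.2) with heq | hlt
    · subst heq; simp
    · have hwI : w ∈ Ico a u₀ := ⟨ht₀.1.trans hw.1.le, hlt⟩
      have hup : sl₁ w ≤ D := le_csSup hS₁bdd ⟨w, hwI, rfl⟩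
      have hlo : sl₁ t₀ ≤ sl₁ w := hsl₁mono t₀ ht₀ w hwI hw.1.le
      have hne : w - u₀ ≠ 0 := ne_of_lt (sub_neg.2 hlt)
      have key : E₁ w - E₁ u₀ = (w - u₀) * sl₁ w := by
        rw [hsl₁def]; field_simp
      rw [smul_eq_mul, key, Real.norm_eq_abs, Real.norm_eq_abs,
        show (w - u₀) * sl₁ w - (w - u₀) * D = (w - u₀) * (sl₁ w - D) by ring, abs_mul]
      have : |sl₁ w - D| ≤ c := abs_le.2 ⟨by linarith, by linarith⟩
      calc |w - u₀| * |sl₁ w - D| ≤ |w - u₀| * c := by gcongr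
        _ = c * |w - u₀| := mul_comm _ _
  have hDeq : derivWithin E₁ (Iic u₀) u₀ = D :=
    hD.derivWithin (uniqueDiffOn_Iic u₀ u₀ self_mem_Iic)
  rw [hDeq]
  -- case split on contact at u₀
  rcases eq_or_lt_of_le (hE₂le u₀ hu₀I) with hA | hB
  · -- Case A : the envelope touches f at u₀
    set C : ℝ := 3*(L:ℝ)/2 with hCdef
    have hCpos : (0:ℝ) ≤ C := by positivity
    have htendR : Tendsto (slope f u₀) (nhdsWithin u₀ (Ioi u₀)) (nhds (deriv f u₀)) :=
      (hasDerivAt_iff_tendsto_slope.1 (hf u₀).hasDerivAt).mono_left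
        (nhdsWithin_mono u₀ (fun z hz => mem_compl_singleton_iff.2 (ne_of_gt hz)))
    have htendL : Tendsto (slope f u₀) (nhdsWithin u₀ (Iio u₀)) (nhds (deriv f u₀)) :=
      (hasDerivAt_iff_tendsto_slope.1 (hf u₀).hasDerivAt).mono_left
        (nhdsWithin_mono u₀ (fun z hz => mem_compl_singleton_iff.2 (ne_of_lt hz)))
    have hlow : ∀ w ∈ Icc a b, f u₀ + deriv f u₀ * (w - u₀) ≤ E₂ w := by
      intro w hw
      rcases lt_trichotomy w u₀ with hlt | heq | hgt
      · have hq : (E₂ w - E₂ u₀)/(w - u₀) ≤ deriv f u₀ := by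
          refine ge_of_tendsto htendR ?_
          filter_upwards [Ioc_mem_nhdsGT_of_mem (⟨le_rfl, h2⟩ : u₀ ∈ Ico u₀ b)] with z hz
          have hzI : z ∈ Icc a b := ⟨hau.trans hz.1.le, hz.2⟩
          have h3 : (E₂ w - E₂ u₀)/(w - u₀) ≤ (E₂ z - E₂ u₀)/(z - u₀) :=
            hconv₂.secant_mono hu₀I hw hzI (ne_of_lt hlt) (ne_of_gt hz.1)
              (hlt.le.trans hz.1.le)
          have h4 : (E₂ z - E₂ u₀)/(z - u₀) ≤ slope f u₀ z := by
            rw [slope_def_field]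
            have hzpos : 0 < z - u₀ := sub_pos.2 hz.1
            have hnum : E₂ z - E₂ u₀ ≤ f z - f u₀ := by
              have := hE₂le z hzI
              linarith [hA]
            exact (div_le_div_iff_of_pos_right hzpos).2 hnum
          linarith
        have hwne : w - u₀ < 0 := sub_neg.2 hlt
        rw [div_le_iff_of_neg hwne] at hq
        linarith [hq, hA]
      · subst heq; simp [hA]
      · have hq : deriv f u₀ ≤ (E₂ w - E₂ u₀)/(w - u₀) := by
          refine le_of_tendsto htendL ?_
          filter_upwards [Ico_mem_nhdsLT_of_mem (⟨h1, le_rfl⟩ : u₀ ∈ Ioc a u₀)] with t ht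
          have htI : t ∈ Icc a b := ⟨ht.1, ht.2.le.trans h2.le⟩
          have h3 : (E₂ t - E₂ u₀)/(t - u₀) ≤ (E₂ w - E₂ u₀)/(w - u₀) :=
            hconv₂.secant_mono hu₀I htI hw (ne_of_lt ht.2) (ne_of_gt hgt)
              (ht.2.le.trans hgt.le)
          have h4 : slope f u₀ t ≤ (E₂ t - E₂ u₀)/(t - u₀) := by
            rw [slope_def_field]
            have htneg : t - u₀ < 0 := sub_neg.2 ht.2
            rw [div_le_iff_of_neg htneg, div_mul_cancel₀ _ (ne_of_lt htneg)]
            have := hE₂le t htI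
            linarith [hA]
          linarith
        have hwpos : 0 < w - u₀ := sub_pos.2 hgt
        rw [le_div_iff₀ hwpos] at hq
        linarith [hq, hA]
    have hupp : ∀ w ∈ Icc a b, E₂ w ≤ f u₀ + deriv f u₀ * (w - u₀) + C * (w-u₀)^2 := by
      intro w hw
      have hu := taylor_up hf hL u₀ w
      have he := hE₂le w hw
      rw [hCdef]; linarith
    have hd₂ : HasDerivWithinAt E₂ (deriv f u₀) (Icc a b) u₀ := by
      rw [hasDerivWithinAt_iff_isLittleO, Asymptotics.isLittleO_iff]
      intro c hc
      filter_upwards [mem_nhdsWithin_of_mem_nhds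
        (Metric.ball_mem_nhds u₀ (show (0:ℝ) < c/(C+1) by positivity)),
        self_mem_nhdsWithin] with w hwb hwI
      have habs : |w - u₀| < c/(C+1) := by
        rw [← Real.dist_eq]; exact Metric.mem_ball.1 hwb
      have h5 : |E₂ w - E₂ u₀ - (w - u₀) * deriv f u₀| ≤ C * (w-u₀)^2 := by
        apply abs_le.2
        constructor
        · have := hlow w hwI
          nlinarith [sq_nonneg (w-u₀)]
        · have := hupp w hwI
          linarith [hA]
      have h6 : C * (w - u₀)^2 ≤ c * |w - u₀| := by
        rw [← sq_abs, pow_two]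
        have h8 : C * |w - u₀| ≤ c := by
          have h9 : C * |w - u₀| ≤ C * (c/(C+1)) :=
            mul_le_mul_of_nonneg_left habs.le hCpos
          have h10 : C * (c/(C+1)) ≤ c := by
            rw [mul_div_assoc']
            rw [div_le_iff₀ (by positivity : (0:ℝ) < C+1)]
            nlinarith [hc.le]
          linarith
        calc C * (|w-u₀| * |w-u₀|) = (C*|w-u₀|) * |w-u₀| := by ring
          _ ≤ c * |w-u₀| := mul_le_mul_of_nonneg_right h8 (abs_nonneg _)
      rw [smul_eq_mul, Real.norm_eq_abs, Real.norm_eq_abs]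
      exact h5.trans h6
    have hp : derivWithin E₂ (Icc a b) u₀ = deriv f u₀ :=
      hd₂.derivWithin (uniqueDiffOn_Icc hab u₀ hu₀I)
    rw [hp]
    have hDle : D ≤ deriv f u₀ := by
      apply csSup_le hS₁ne
      rintro s ⟨t, ht, rfl⟩
      have hlt : t - u₀ < 0 := sub_neg.2 ht.2
      rw [hsl₁def]
      simp only
      rw [div_le_iff_of_neg hlt]
      have h8 := hlow t (hsub ⟨ht.1, ht.2.le⟩)
      have h9 := hE₂E₁ t ⟨ht.1, ht.2.le⟩
      rw [hE₁u₀]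
      linarith
    nlinarith [mul_nonneg hLpos (le_of_lt (sub_pos.2 h2))]
  · -- Case B : gap at u₀
    set sl₂ : ℝ → ℝ := fun t => (E₂ t - E₂ u₀) / (t - u₀) with hsl₂def
    set SL : Set ℝ := sl₂ '' (Ico a u₀) with hSLdef
    set SR : Set ℝ := sl₂ '' (Ioc u₀ b) with hSRdef
    have hSLne : SL.Nonempty := ⟨sl₂ a, a, ⟨le_rfl, h1⟩, rfl⟩
    have hSRne : SR.Nonempty := ⟨sl₂ b, b, ⟨h2, le_rfl⟩, rfl⟩
    have hcross : ∀ s ∈ SL, ∀ r ∈ SR, s ≤ r := by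
      rintro s ⟨t, ht, rfl⟩ r ⟨z, hz, rfl⟩
      exact hconv₂.secant_mono hu₀I ⟨ht.1, ht.2.le.trans h2.le⟩ ⟨hau.trans hz.1.le, hz.2⟩
        (ne_of_lt ht.2) (ne_of_gt hz.1) (ht.2.le.trans hz.1.le)
    have hbddL : BddAbove SL := ⟨sl₂ b, fun s hs => hcross s hs _ ⟨b, ⟨h2, le_rfl⟩, rfl⟩⟩
    have hbddR : BddBelow SR := ⟨sl₂ a, fun r hr => hcross _ ⟨a, ⟨le_rfl, h1⟩, rfl⟩ r hr⟩
    set mL : ℝ := sSup SL with hmLdef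
    set mR : ℝ := sInf SR with hmRdef
    have hmLR : mL ≤ mR :=
      csSup_le hSLne (fun s hs => le_csInf hSRne (fun r hr => hcross s hs r hr))
    have hwstar : ∀ σ : ℝ, mL < σ → ∀ c₀ ∈ Icc a b,
        (∀ w ∈ Icc a b, f c₀ + σ * (w - c₀) ≤ f w) → u₀ < c₀ := by
      intro σ hσ c₀ hc₀ hline
      have hadm : Adm f a b (fun w => σ * w + (f c₀ - σ * c₀)) := by
        apply line_adm
        intro w hw
        have := hline w hw
        linarith
      have hcontact : E₂ c₀ = f c₀ := by
        refine le_antisymm (hE₂le c₀ hc₀) ?_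
        have := le_env hadm hc₀
        linarith
      have hlineu₀ : f c₀ + σ * (u₀ - c₀) ≤ E₂ u₀ := by
        have := le_env hadm hu₀I
        linarith
      rcases lt_trichotomy c₀ u₀ with hlt | heq | hgt
      · exfalso
        have hslc : σ ≤ sl₂ c₀ := by
          rw [hsl₂def]
          simp only
          rw [le_div_iff_of_neg (sub_neg.2 hlt), hcontact]
          linarith
        have : sl₂ c₀ ≤ mL := le_csSup hbddL ⟨c₀, ⟨hc₀.1, hlt⟩, rfl⟩
        linarith
      · exfalso
        subst heq
        rw [hcontact] at hB
        exact lt_irrefl _ hB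
      · exact hgt
    have hmRL : mR ≤ mL := by
      by_contra hcon
      push_neg at hcon
      obtain ⟨c₀, hc₀, hline⟩ := exists_min_line hf hab.le ((mL + mR)/2)
      have hcu : u₀ < c₀ := hwstar _ (by linarith) c₀ hc₀ hline
      have hadm : Adm f a b (fun w => (mL+mR)/2 * w + (f c₀ - (mL+mR)/2 * c₀)) := by
        apply line_adm
        intro w hw
        have := hline w hw
        linarith
      have hcontact : E₂ c₀ = f c₀ := by
        refine le_antisymm (hE₂le c₀ hc₀) ?_
        have := le_env hadm hc₀
        linarith
      have hlineu₀ : f c₀ + (mL+mR)/2 * (u₀ - c₀) ≤ E₂ u₀ := by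
        have := le_env hadm hu₀I
        linarith
      have h1' : mR ≤ sl₂ c₀ := csInf_le hbddR ⟨c₀, ⟨hcu, hc₀.2⟩, rfl⟩
      have h2' : sl₂ c₀ ≤ (mL+mR)/2 := by
        rw [hsl₂def]
        simp only
        rw [div_le_iff₀ (sub_pos.2 hcu), hcontact]
        linarith
      linarith
    have hmeq : mR = mL := le_antisymm hmRL hmLR
    have hd₂ : HasDerivWithinAt E₂ mL (Icc a b) u₀ := by
      rw [hasDerivWithinAt_iff_isLittleO, Asymptotics.isLittleO_iff]
      intro c hc
      obtain ⟨s, hsmem, hslt⟩ : ∃ s ∈ SL, mL - c < s :=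
        exists_lt_of_lt_csSup hSLne (by linarith)
      obtain ⟨t₀, ht₀, rfl⟩ := hsmem
      obtain ⟨r, hrmem, hrlt⟩ : ∃ r ∈ SR, r < mR + c :=
        exists_lt_of_csInf_lt hSRne (by linarith)
      obtain ⟨z₀, hz₀, rfl⟩ := hrmem
      filter_upwards [mem_nhdsWithin_of_mem_nhds (Ioo_mem_nhds ht₀.2 hz₀.1),
        self_mem_nhdsWithin] with w hw hwI
      rcases lt_trichotomy w u₀ with hlt | heq | hgt
      · have hwmem : w ∈ Ico a u₀ := ⟨ht₀.1.trans hw.1.le, hlt⟩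
        have hup : sl₂ w ≤ mL := le_csSup hbddL ⟨w, hwmem, rfl⟩
        have hlo : sl₂ t₀ ≤ sl₂ w :=
          hconv₂.secant_mono hu₀I ⟨ht₀.1, ht₀.2.le.trans h2.le⟩
            ⟨hwmem.1, hlt.le.trans h2.le⟩ (ne_of_lt ht₀.2) (ne_of_lt hlt) hw.1.le
        have hne : w - u₀ ≠ 0 := ne_of_lt (sub_neg.2 hlt)
        have key : E₂ w - E₂ u₀ = (w - u₀) * sl₂ w := by
          rw [hsl₂def]
          field_simp
        rw [smul_eq_mul, key, Real.norm_eq_abs, Real.norm_eq_abs,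
          show (w - u₀) * sl₂ w - (w - u₀) * mL = (w - u₀) * (sl₂ w - mL) by ring, abs_mul]
        have : |sl₂ w - mL| ≤ c := abs_le.2 ⟨by linarith, by linarith⟩
        calc |w - u₀| * |sl₂ w - mL| ≤ |w - u₀| * c := by gcongr
          _ = c * |w - u₀| := mul_comm _ _
      · subst heq
        simp
      · have hwmem : w ∈ Ioc u₀ b := ⟨hgt, hw.2.le.trans hz₀.2⟩
        have hlo : mR ≤ sl₂ w := csInf_le hbddR ⟨w, hwmem, rfl⟩
        have hup : sl₂ w ≤ sl₂ z₀ :=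
          hconv₂.secant_mono hu₀I ⟨hau.trans hgt.le, hwmem.2⟩
            ⟨hau.trans hz₀.1.le, hz₀.2⟩ (ne_of_gt hgt) (ne_of_gt hz₀.1) hw.2.le
        have hne : w - u₀ ≠ 0 := ne_of_gt (sub_pos.2 hgt)
        have key : E₂ w - E₂ u₀ = (w - u₀) * sl₂ w := by
          rw [hsl₂def]
          field_simp
        rw [smul_eq_mul, key, Real.norm_eq_abs, Real.norm_eq_abs,
          show (w - u₀) * sl₂ w - (w - u₀) * mL = (w - u₀) * (sl₂ w - mL) by ring, abs_mul]
        have : |sl₂ w - mL| ≤ c := abs_le.2 ⟨by linarith [hmeq], by linarith [hmeq]⟩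
        calc |w - u₀| * |sl₂ w - mL| ≤ |w - u₀| * c := by gcongr
          _ = c * |w - u₀| := mul_comm _ _
    have hp : derivWithin E₂ (Icc a b) u₀ = mL :=
      hd₂.derivWithin (uniqueDiffOn_Icc hab u₀ hu₀I)
    rw [hp]
    have hfinal : ∀ ε : ℝ, 0 < ε → D ≤ mL + (L:ℝ)/2 * (b - u₀) + ε := by
      intro ε hε
      obtain ⟨z, hzI, hline⟩ := exists_min_line hf hab.le (mL + ε)
      have hzu : u₀ < z := hwstar _ (by linarith) z hzI hline
      have hchord : ∀ t ∈ Icc a u₀,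
          f u₀ + (mL + ε + (L:ℝ)/2 * (b - u₀)) * (t - u₀) ≤ f t := by
        intro t ht
        have hi := taylor_low hf hL u₀ z
        have hii := taylor_low hf hL u₀ t
        have hiii := hline t (hsub ht)
        have hx : 0 ≤ u₀ - t := by linarith [ht.2]
        have hδ : 0 < z - u₀ := sub_pos.2 hzu
        have hδb : z - u₀ ≤ b - u₀ := by linarith [hzI.2]
        have hA1 : f u₀ - f t - (mL+ε)*(u₀-t) ≤
            -(deriv f u₀)*(z-u₀) + (L:ℝ)/2*(z-u₀)^2 + (mL+ε)*(z-u₀) := by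
          nlinarith [hi, hiii]
        have hA2 : f u₀ - f t - (mL+ε)*(u₀-t) ≤
            (deriv f u₀ - (mL+ε))*(u₀-t) + (L:ℝ)/2*(u₀-t)^2 := by
          nlinarith [hii]
        have h10 := mul_le_mul_of_nonneg_right hA1 hx
        have h11 := mul_le_mul_of_nonneg_left hA2 hδ.le
        have hmul : (f u₀ - f t - (mL+ε)*(u₀-t)) * ((u₀-t) + (z-u₀)) ≤
            ((L:ℝ)/2 * ((u₀-t) * (z-u₀))) * ((u₀-t) + (z-u₀)) := by
          nlinarith [h10, h11]
        have hQ2 : f u₀ - f t - (mL+ε)*(u₀-t) ≤ (L:ℝ)/2 * ((u₀-t) * (z-u₀)) :=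
          le_of_mul_le_mul_right hmul (by linarith)
        have h9 : (L:ℝ)/2 * ((u₀-t) * (z-u₀)) ≤ (L:ℝ)/2 * ((u₀-t) * (b-u₀)) := by
          apply mul_le_mul_of_nonneg_left _ (by positivity)
          exact mul_le_mul_of_nonneg_left hδb hx
        nlinarith [hQ2, h9]
      have hadm : Adm f a u₀ (fun w => (mL + ε + (L:ℝ)/2 * (b-u₀)) * w +
          (f u₀ - (mL + ε + (L:ℝ)/2 * (b-u₀)) * u₀)) := by
        apply line_adm
        intro w hw
        have := hchord w hw
        linarith
      apply csSup_le hS₁ne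
      rintro s ⟨t, ht, rfl⟩
      have hlt : t - u₀ < 0 := sub_neg.2 ht.2
      rw [hsl₁def]
      simp only
      rw [div_le_iff_of_neg hlt]
      have h8 := le_env hadm (⟨ht.1, ht.2.le⟩ : t ∈ Icc a u₀)
      rw [hE₁u₀]
      linarith
    have hDle : D ≤ mL + (L:ℝ)/2 * (b - u₀) := le_of_forall_pos_le_add hfinal
    nlinarith [mul_nonneg hLpos (le_of_lt (sub_pos.2 h2))]
end

section
/- For C¹ functions f and g and an interval [a,b], the sup norm on [a,b] of the difference of the derivatives of the convex envelopes of f and g is at most the sup norm of f' − g': ‖(conv_{[a,b]} f)' − (conv_{[a,b]} g)'‖_∞ ≤ ‖f' − g'‖_∞. -/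
open Set

namespace CEAux

open Filter Topology

variable {f : ℝ → ℝ} {a b u : ℝ}

lemma convexOn_affine (p q : ℝ) {s : Set ℝ} (hs : Convex ℝ s) :
    ConvexOn ℝ s (fun x => p * x + q) := by
  refine ⟨hs, fun x _ y _ α β hα hβ hαβ => le_of_eq ?_⟩
  simp only [smul_eq_mul]
  linear_combination (-q) * hαβ

lemma convexOn_affine_plus_max (p₁ q₁ ε p₂ q₂ : ℝ) (hε : 0 ≤ ε) {s : Set ℝ} (hs : Convex ℝ s) :
    ConvexOn ℝ s (fun x => p₁ * x + q₁ + ε * max 0 (p₂ * x + q₂)) := by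
  have h1 := convexOn_affine p₁ q₁ hs
  have h2 := ((convexOn_const (0:ℝ) hs).sup (convexOn_affine p₂ q₂ hs)).smul hε
  exact h1.add h2

lemma exists_minorant (hf : ContDiff ℝ 1 f) (hab : a ≤ b) :
    ∃ h : ℝ → ℝ, ConvexOn ℝ (Icc a b) h ∧ ∀ x ∈ Icc a b, h x ≤ f x := by
  obtain ⟨z, hz, hz'⟩ := isCompact_Icc.exists_isMinOn (nonempty_Icc.2 hab)
    (hf.continuous.continuousOn (s := Icc a b))
  exact ⟨fun _ => f z, convexOn_const _ (convex_Icc a b), fun x hx => hz' hx⟩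

lemma bddAbove_set (hu : u ∈ Icc a b) :
    BddAbove {y : ℝ | ∃ g : ℝ → ℝ, ConvexOn ℝ (Set.Icc a b) g ∧
      (∀ x ∈ Set.Icc a b, g x ≤ f x) ∧ g u = y} :=
  ⟨f u, by rintro y ⟨h, _, hle, rfl⟩; exact hle u hu⟩

lemma le_convEnv {h : ℝ → ℝ} (hc : ConvexOn ℝ (Icc a b) h) (hle : ∀ x ∈ Icc a b, h x ≤ f x)
    (hu : u ∈ Icc a b) : h u ≤ convEnv f a b u :=
  le_csSup (bddAbove_set hu) ⟨h, hc, hle, rfl⟩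

lemma convEnv_le (hf : ContDiff ℝ 1 f) (hab : a ≤ b) (hu : u ∈ Icc a b) :
    convEnv f a b u ≤ f u := by
  obtain ⟨h, hc, hle⟩ := exists_minorant hf hab
  exact csSup_le ⟨h u, h, hc, hle, rfl⟩ (by rintro y ⟨h', _, hle', rfl⟩; exact hle' u hu)

lemma convexOn_convEnv (hf : ContDiff ℝ 1 f) (hab : a ≤ b) :
    ConvexOn ℝ (Icc a b) (convEnv f a b) := by
  obtain ⟨h₀, hc₀, hle₀⟩ := exists_minorant hf hab
  refine ⟨convex_Icc a b, fun x hx y hy α β hα hβ hαβ => ?_⟩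
  refine csSup_le ⟨h₀ (α • x + β • y), h₀, hc₀, hle₀, rfl⟩ ?_
  rintro z ⟨h, hc, hle, rfl⟩
  calc h (α • x + β • y) ≤ α • h x + β • h y := hc.2 hx hy hα hβ hαβ
    _ ≤ α • convEnv f a b x + β • convEnv f a b y := by
        simp only [smul_eq_mul]
        gcongr
        · exact le_convEnv hc hle hx
        · exact le_convEnv hc hle hy


lemma exists_lip (hf : ContDiff ℝ 1 f) (hab : a ≤ b) :
    ∃ K : ℝ, 0 ≤ K ∧ ∀ x ∈ Icc a b, ∀ y ∈ Icc a b, |f x - f y| ≤ K * |x - y| := by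
  obtain ⟨z, hz, hz'⟩ := isCompact_Icc.exists_isMaxOn (nonempty_Icc.2 hab)
    ((continuous_abs.comp (hf.continuous_deriv le_rfl)).continuousOn (s := Icc a b))
  refine ⟨|deriv f z|, abs_nonneg _, fun x hx y hy => ?_⟩
  have := (convex_Icc a b).norm_image_sub_le_of_norm_deriv_le
    (fun w _ => (hf.differentiable one_ne_zero).differentiableAt)
    (fun w hw => hz' hw) hy hx
  simpa [Real.norm_eq_abs] using this


lemma exists_steep_bounds (hf : ContDiff ℝ 1 f) (hab : a ≤ b) :
    ∃ K : ℝ, 0 ≤ K ∧ (∀ x ∈ Icc a b, f a - K * (x - a) ≤ convEnv f a b x) ∧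
      (∀ x ∈ Icc a b, f b - K * (b - x) ≤ convEnv f a b x) := by
  obtain ⟨K, hK0, hK⟩ := exists_lip hf hab
  refine ⟨K, hK0, fun x hx => ?_, fun x hx => ?_⟩
  · have hle : ∀ y ∈ Icc a b, (fun y => -K * y + (f a + K * a)) y ≤ f y := by
      intro y hy
      have := hK a (left_mem_Icc.2 hab) y hy
      have habs : |a - y| = y - a := by rw [abs_sub_comm, abs_of_nonneg (by linarith [hy.1])]
      rw [habs] at this
      have h2 := (abs_le.1 this).2
      show -K * y + (f a + K * a) ≤ f y
      nlinarith
    have := le_convEnv (convexOn_affine (-K) (f a + K * a) (convex_Icc a b)) hle hx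
    linarith
  · have hle : ∀ y ∈ Icc a b, (fun y => K * y + (f b - K * b)) y ≤ f y := by
      intro y hy
      have := hK b (right_mem_Icc.2 hab) y hy
      have habs : |b - y| = b - y := abs_of_nonneg (by linarith [hy.2])
      rw [habs] at this
      have h2 := (abs_le.1 this).2
      show K * y + (f b - K * b) ≤ f y
      nlinarith
    have := le_convEnv (convexOn_affine K (f b - K * b) (convex_Icc a b)) hle hx
    linarith

lemma convEnv_left (hf : ContDiff ℝ 1 f) (hab : a ≤ b) : convEnv f a b a = f a := by
  obtain ⟨K, hK0, hK⟩ := exists_lip hf hab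
  refine le_antisymm (convEnv_le hf hab (left_mem_Icc.2 hab)) ?_
  have hle : ∀ x ∈ Icc a b, (fun x => -K * x + (f a + K * a)) x ≤ f x := by
    intro x hx
    have := hK a (left_mem_Icc.2 hab) x hx
    have habs : |a - x| = x - a := by rw [abs_sub_comm, abs_of_nonneg (by linarith [hx.1])]
    rw [habs] at this
    have h2 := (abs_le.1 this).2
    show -K * x + (f a + K * a) ≤ f x
    nlinarith
  have := le_convEnv (convexOn_affine (-K) (f a + K * a) (convex_Icc a b)) hle
    (left_mem_Icc.2 hab)
  calc f a = -K * a + (f a + K * a) := by ring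
    _ ≤ convEnv f a b a := this

lemma convEnv_right (hf : ContDiff ℝ 1 f) (hab : a ≤ b) : convEnv f a b b = f b := by
  obtain ⟨K, hK0, hK⟩ := exists_lip hf hab
  refine le_antisymm (convEnv_le hf hab (right_mem_Icc.2 hab)) ?_
  have hle : ∀ x ∈ Icc a b, (fun x => K * x + (f b - K * b)) x ≤ f x := by
    intro x hx
    have := hK b (right_mem_Icc.2 hab) x hx
    have habs : |b - x| = b - x := abs_of_nonneg (by linarith [hx.2])
    rw [habs] at this
    have h2 := (abs_le.1 this).2
    show K * x + (f b - K * b) ≤ f x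
    nlinarith
  have := le_convEnv (convexOn_affine K (f b - K * b) (convex_Icc a b)) hle
    (right_mem_Icc.2 hab)
  calc f b = K * b + (f b - K * b) := by ring
    _ ≤ convEnv f a b b := this


lemma tendsto_sInf_right {φ : ℝ → ℝ} {u b : ℝ} (hub : u < b)
    (mono : ∀ ⦃x⦄, x ∈ Ioc u b → ∀ ⦃y⦄, y ∈ Ioc u b → x ≤ y → φ x ≤ φ y)
    (bdd : BddBelow (φ '' Ioc u b)) :
    Tendsto φ (𝓝[>] u) (𝓝 (sInf (φ '' Ioc u b))) := by
  set L := sInf (φ '' Ioc u b) with hL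
  have hne : (φ '' Ioc u b).Nonempty := ⟨φ b, b, ⟨hub, le_rfl⟩, rfl⟩
  refine tendsto_order.2 ⟨fun c hc => ?_, fun c hc => ?_⟩
  · filter_upwards [Ioo_mem_nhdsGT_of_mem (α := ℝ) ⟨le_refl u, hub⟩] with x hx
    exact lt_of_lt_of_le hc (csInf_le bdd ⟨x, ⟨hx.1, hx.2.le⟩, rfl⟩)
  · obtain ⟨z, ⟨x₀, hx₀, rfl⟩, hz⟩ := exists_lt_of_csInf_lt hne hc
    filter_upwards [Ioo_mem_nhdsGT_of_mem (α := ℝ) ⟨le_refl u, hx₀.1⟩] with x hx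
    exact lt_of_le_of_lt (mono ⟨hx.1, (hx.2.le.trans hx₀.2)⟩ hx₀ hx.2.le) hz

lemma tendsto_sSup_left {φ : ℝ → ℝ} {a u : ℝ} (hau : a < u)
    (mono : ∀ ⦃x⦄, x ∈ Ico a u → ∀ ⦃y⦄, y ∈ Ico a u → x ≤ y → φ x ≤ φ y)
    (bdd : BddAbove (φ '' Ico a u)) :
    Tendsto φ (𝓝[<] u) (𝓝 (sSup (φ '' Ico a u))) := by
  set L := sSup (φ '' Ico a u) with hL
  have hne : (φ '' Ico a u).Nonempty := ⟨φ a, a, ⟨le_rfl, hau⟩, rfl⟩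
  refine tendsto_order.2 ⟨fun c hc => ?_, fun c hc => ?_⟩
  · obtain ⟨z, ⟨x₀, hx₀, rfl⟩, hz⟩ := exists_lt_of_lt_csSup hne hc
    filter_upwards [Ioo_mem_nhdsLT_of_mem (α := ℝ) ⟨hx₀.2, le_refl u⟩] with x hx
    exact lt_of_lt_of_le hz (mono hx₀ ⟨hx₀.1.trans hx.1.le, hx.2⟩ hx.1.le)
  · filter_upwards [Ioo_mem_nhdsLT_of_mem (α := ℝ) ⟨hau, le_refl u⟩] with x hx
    exact lt_of_le_of_lt (le_csSup bdd ⟨x, ⟨hx.1.le, hx.2⟩, rfl⟩) hc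

lemma exists_contact_left (hf : ContDiff ℝ 1 f) (hab : a ≤ b) (hu : u ∈ Icc a b) {d : ℝ}
    (hsupp : ∀ x ∈ Icc a b, convEnv f a b u + d * (x - u) ≤ convEnv f a b x) :
    ∃ p ∈ Icc a u, f p = convEnv f a b u + d * (p - u) := by
  set F := convEnv f a b with hF
  rcases eq_or_lt_of_le hu.2 with hub | hub
  · exact ⟨u, ⟨hu.1, le_rfl⟩, by
      rw [hub] at hu ⊢; simp [hF, convEnv_right hf hab]⟩
  set ℓ : ℝ → ℝ := fun x => F u + d * (x - u) with hℓ
  have hℓf : ∀ x ∈ Icc a b, ℓ x ≤ f x := fun x hx => (hsupp x hx).trans (convEnv_le hf hab hx)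
  by_contra hcon
  push_neg at hcon
  have hpos : ∀ p ∈ Icc a u, ℓ p < f p := fun p hp =>
    lt_of_le_of_ne (hℓf p ⟨hp.1, hp.2.trans hu.2⟩) (fun h => hcon p hp h.symm)
  have hcontℓ : Continuous ℓ := by
    apply Continuous.add continuous_const
    exact continuous_const.mul (continuous_id.sub continuous_const)
  set T : Set ℝ := Icc u b ∩ {x | f x = ℓ x} with hT
  have hkey : ∃ c, u < c ∧ c ≤ b ∧ ∀ x ∈ Icc a c, ℓ x < f x := by
    by_cases hTne : T.Nonempty
    · have hTc : IsClosed T := isClosed_Icc.inter (isClosed_eq hf.continuous hcontℓ)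
      have hTbdd : BddBelow T := ⟨u, fun x hx => hx.1.1⟩
      have hx₁ := hTc.csInf_mem hTne hTbdd
      set x₁ := sInf T with hx₁def
      have hux₁ : u < x₁ := by
        rcases eq_or_lt_of_le hx₁.1.1 with h | h
        · exact absurd hx₁.2 (by simpa [← h] using (hpos u ⟨hu.1, le_rfl⟩).ne')
        · exact h
      refine ⟨(u + x₁) / 2, by linarith, by linarith [hx₁.1.2], fun x hx => ?_⟩
      rcases le_or_gt x u with hxu | hxu
      · exact hpos x ⟨hx.1, hxu⟩
      · refine lt_of_le_of_ne (hℓf x ⟨hx.1, by linarith [hx₁.1.2, hx.2]⟩) fun heq => ?_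
        have : x ∈ T := ⟨⟨hxu.le, by linarith [hx₁.1.2, hx.2]⟩, heq.symm⟩
        have := csInf_le hTbdd this
        simp only [← hx₁def] at this
        linarith [hx.2]
    · refine ⟨b, hub, le_rfl, fun x hx => ?_⟩
      rcases le_or_gt x u with hxu | hxu
      · exact hpos x ⟨hx.1, hxu⟩
      · refine lt_of_le_of_ne (hℓf x ⟨hx.1, hx.2⟩) fun heq => ?_
        exact hTne ⟨x, ⟨hxu.le, hx.2⟩, heq.symm⟩
  obtain ⟨c, hc1, hc2, hpos2⟩ := hkey
  have hac : a ≤ c := hu.1.trans hc1.le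
  have hca : 0 < c - a := by linarith [hu.1]
  obtain ⟨z, hz, hz'⟩ := isCompact_Icc.exists_isMinOn (nonempty_Icc.2 hac)
    ((hf.continuous.sub hcontℓ).continuousOn)
  set ε := f z - ℓ z with hε'
  clear_value ε
  have hε : 0 < ε := by rw [hε']; exact sub_pos.2 (hpos2 z hz)
  set h : ℝ → ℝ := fun x => ℓ x + ε * max 0 ((c - x) / (c - a)) with hh
  have hconv : ConvexOn ℝ (Icc a b) h := by
    have base := (convexOn_affine d (F u - d * u) (convex_Icc a b)).add
      ((((convexOn_const (0:ℝ) (convex_Icc a b)).sup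
        (convexOn_affine (-(c-a)⁻¹) (c/(c-a)) (convex_Icc a b)))).smul hε.le)
    convert base using 1
    · rfl
    funext x
    simp only [hh, hℓ, Pi.add_apply, Pi.sup_apply, smul_eq_mul]
    have h1 : (c - x) / (c - a) = -(c-a)⁻¹ * x + c/(c-a) := by ring
    rw [h1]
    ring_nf
  have hmin : ∀ x ∈ Icc a b, h x ≤ f x := by
    intro x hx
    rcases le_or_gt x c with hxc | hxc
    · have hm1 : max 0 ((c - x) / (c - a)) ≤ 1 := by
        apply max_le (by norm_num)
        rw [div_le_one hca]; linarith [hx.1]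
      have hεle : ε ≤ f x - ℓ x := by
        rw [hε']; exact hz' (⟨hx.1, hxc⟩ : x ∈ Icc a c)
      have hmul := mul_le_mul_of_nonneg_left hm1 hε.le
      show ℓ x + ε * max 0 ((c - x) / (c - a)) ≤ f x
      calc ℓ x + ε * max 0 ((c - x) / (c - a)) ≤ ℓ x + ε * 1 :=
            add_le_add_right hmul _
        _ = ℓ x + ε := by ring
        _ ≤ f x := by linarith
    · have : (c - x) / (c - a) < 0 := div_neg_of_neg_of_pos (by linarith) hca
      have hm0 : max 0 ((c - x) / (c - a)) = 0 := max_eq_left this.le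
      simp only [hh, hm0, mul_zero, add_zero]
      exact hℓf x hx
  have hcontra := le_convEnv hconv hmin hu
  have : h u = F u + ε * ((c - u) / (c - a)) := by
    simp only [hh, hℓ]
    rw [max_eq_right (le_of_lt (div_pos (by linarith) hca))]
    ring
  rw [this] at hcontra
  have : 0 < ε * ((c - u) / (c - a)) := mul_pos hε (div_pos (by linarith) hca)
  simp only [hF] at hcontra
  linarith


lemma exists_contact_right (hf : ContDiff ℝ 1 f) (hab : a ≤ b) (hu : u ∈ Icc a b) {d : ℝ}
    (hsupp : ∀ x ∈ Icc a b, convEnv f a b u + d * (x - u) ≤ convEnv f a b x) :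
    ∃ q ∈ Icc u b, f q = convEnv f a b u + d * (q - u) := by
  set F := convEnv f a b with hF
  rcases eq_or_lt_of_le hu.1 with hua | hua
  · exact ⟨u, ⟨le_rfl, hu.2⟩, by
      rw [← hua] at hu ⊢; simp [hF, convEnv_left hf hab]⟩
  set ℓ : ℝ → ℝ := fun x => F u + d * (x - u) with hℓ
  have hℓf : ∀ x ∈ Icc a b, ℓ x ≤ f x := fun x hx => (hsupp x hx).trans (convEnv_le hf hab hx)
  by_contra hcon
  push_neg at hcon
  have hpos : ∀ q ∈ Icc u b, ℓ q < f q := fun q hq =>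
    lt_of_le_of_ne (hℓf q ⟨hu.1.trans hq.1, hq.2⟩) (fun h => hcon q hq h.symm)
  have hcontℓ : Continuous ℓ := by
    apply Continuous.add continuous_const
    exact continuous_const.mul (continuous_id.sub continuous_const)
  set T : Set ℝ := Icc a u ∩ {x | f x = ℓ x} with hT
  have hkey : ∃ c, a ≤ c ∧ c < u ∧ ∀ x ∈ Icc c b, ℓ x < f x := by
    by_cases hTne : T.Nonempty
    · have hTc : IsClosed T := isClosed_Icc.inter (isClosed_eq hf.continuous hcontℓ)
      have hTbdd : BddAbove T := ⟨u, fun x hx => hx.1.2⟩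
      have hx₁ := hTc.csSup_mem hTne hTbdd
      set x₁ := sSup T with hx₁def
      have hux₁ : x₁ < u := by
        rcases eq_or_lt_of_le hx₁.1.2 with h | h
        · exact absurd hx₁.2 (by simpa [h] using (hpos u ⟨le_rfl, hu.2⟩).ne')
        · exact h
      refine ⟨(x₁ + u) / 2, by linarith [hx₁.1.1], by linarith, fun x hx => ?_⟩
      rcases le_or_gt u x with hxu | hxu
      · exact hpos x ⟨hxu, hx.2⟩
      · refine lt_of_le_of_ne (hℓf x ⟨by linarith [hx₁.1.1, hx.1], hx.2⟩) fun heq => ?_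
        have : x ∈ T := ⟨⟨by linarith [hx₁.1.1, hx.1], hxu.le⟩, heq.symm⟩
        have := le_csSup hTbdd this
        simp only [← hx₁def] at this
        linarith [hx.1]
    · refine ⟨a, le_rfl, hua, fun x hx => ?_⟩
      rcases le_or_gt u x with hxu | hxu
      · exact hpos x ⟨hxu, hx.2⟩
      · refine lt_of_le_of_ne (hℓf x ⟨hx.1, hx.2⟩) fun heq => ?_
        exact hTne ⟨x, ⟨hx.1, hxu.le⟩, heq.symm⟩
  obtain ⟨c, hc1, hc2, hpos2⟩ := hkey
  have hcb : c ≤ b := hc2.le.trans hu.2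
  have hbc : 0 < b - c := by linarith [hu.2]
  obtain ⟨z, hz, hz'⟩ := isCompact_Icc.exists_isMinOn (nonempty_Icc.2 hcb)
    ((hf.continuous.sub hcontℓ).continuousOn)
  set ε := f z - ℓ z with hε'
  clear_value ε
  have hε : 0 < ε := by rw [hε']; exact sub_pos.2 (hpos2 z hz)
  set h : ℝ → ℝ := fun x => ℓ x + ε * max 0 ((x - c) / (b - c)) with hh
  have hconv : ConvexOn ℝ (Icc a b) h := by
    have base := (convexOn_affine d (F u - d * u) (convex_Icc a b)).add
      ((((convexOn_const (0:ℝ) (convex_Icc a b)).sup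
        (convexOn_affine (b-c)⁻¹ (-c/(b-c)) (convex_Icc a b)))).smul hε.le)
    convert base using 1
    · rfl
    funext x
    simp only [hh, hℓ, Pi.add_apply, Pi.sup_apply, smul_eq_mul]
    have h1 : (x - c) / (b - c) = (b-c)⁻¹ * x + -c/(b-c) := by ring
    rw [h1]
    ring_nf
  have hmin : ∀ x ∈ Icc a b, h x ≤ f x := by
    intro x hx
    rcases le_or_gt c x with hxc | hxc
    · have hm1 : max 0 ((x - c) / (b - c)) ≤ 1 := by
        apply max_le (by norm_num)
        rw [div_le_one hbc]; linarith [hx.2]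
      have hεle : ε ≤ f x - ℓ x := by
        rw [hε']; exact hz' (⟨hxc, hx.2⟩ : x ∈ Icc c b)
      have hmul := mul_le_mul_of_nonneg_left hm1 hε.le
      show ℓ x + ε * max 0 ((x - c) / (b - c)) ≤ f x
      calc ℓ x + ε * max 0 ((x - c) / (b - c)) ≤ ℓ x + ε * 1 :=
            add_le_add_right hmul _
        _ = ℓ x + ε := by ring
        _ ≤ f x := by linarith
    · have : (x - c) / (b - c) < 0 := div_neg_of_neg_of_pos (by linarith) hbc
      have hm0 : max 0 ((x - c) / (b - c)) = 0 := max_eq_left this.le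
      simp only [hh, hm0, mul_zero, add_zero]
      exact hℓf x hx
  have hcontra := le_convEnv hconv hmin hu
  have : h u = F u + ε * ((u - c) / (b - c)) := by
    simp only [hh, hℓ]
    rw [max_eq_right (le_of_lt (div_pos (by linarith) hbc))]
    ring
  rw [this] at hcontra
  have : 0 < ε * ((u - c) / (b - c)) := mul_pos hε (div_pos (by linarith) hbc)
  simp only [hF] at hcontra
  linarith


lemma exists_deriv (hf : ContDiff ℝ 1 f) (hab : a < b) (hu : u ∈ Icc a b) :
    ∃ d, HasDerivWithinAt (convEnv f a b) d (Icc a b) u ∧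
      ∀ x ∈ Icc a b, convEnv f a b u + d * (x - u) ≤ convEnv f a b x := by
  obtain ⟨K, hK0, hKl, hKr⟩ := exists_steep_bounds hf hab.le
  set F := convEnv f a b with hF
  have hFc : ConvexOn ℝ (Icc a b) F := convexOn_convEnv hf hab.le
  rcases eq_or_lt_of_le hu.1 with hua | hua
  · -- a = a
    subst hua
    clear hu
    set d := sInf (slope F a '' Ioc a b) with hd
    have mono : ∀ ⦃x⦄, x ∈ Ioc a b → ∀ ⦃y⦄, y ∈ Ioc a b → x ≤ y → slope F a x ≤ slope F a y := by
      intro x hx y hy hxy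
      rw [slope_def_field, slope_def_field]
      exact hFc.secant_mono (left_mem_Icc.2 hab.le) ⟨hx.1.le, hx.2⟩ ⟨hy.1.le, hy.2⟩
        (ne_of_gt hx.1) (ne_of_gt hy.1) hxy
    have bdd : BddBelow (slope F a '' Ioc a b) := by
      refine ⟨-K, ?_⟩
      rintro _ ⟨x, hx, rfl⟩
      rw [slope_def_field]
      rw [le_div_iff₀ (by linarith [hx.1] : (0:ℝ) < x - a)]
      have h1 := hKl x ⟨hx.1.le, hx.2⟩
      have h2 : F a = f a := convEnv_left hf hab.le
      linarith
    have hsupp : ∀ x ∈ Icc a b, F a + d * (x - a) ≤ F x := by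
      intro x hx
      rcases eq_or_lt_of_le hx.1 with h | h
      · simp [← h]
      · have hdle : d ≤ slope F a x := csInf_le bdd ⟨x, ⟨h, hx.2⟩, rfl⟩
        rw [slope_def_field, le_div_iff₀ (by linarith : (0:ℝ) < x - a)] at hdle
        linarith
    refine ⟨d, ?_, hsupp⟩
    rw [hasDerivWithinAt_iff_tendsto_slope, Icc_sdiff_left,
      nhdsWithin_Ioc_eq_nhdsGT hab]
    exact tendsto_sInf_right hab mono bdd
  rcases eq_or_lt_of_le hu.2 with hub | hub
  · -- u = b
    subst hub
    clear hu
    set d := sSup (slope F u '' Ico a u) with hd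
    have mono : ∀ ⦃x⦄, x ∈ Ico a u → ∀ ⦃y⦄, y ∈ Ico a u → x ≤ y → slope F u x ≤ slope F u y := by
      intro x hx y hy hxy
      rw [slope_def_field, slope_def_field]
      exact hFc.secant_mono (right_mem_Icc.2 hua.le) ⟨hx.1, hx.2.le⟩ ⟨hy.1, hy.2.le⟩
        (ne_of_lt hx.2) (ne_of_lt hy.2) hxy
    have bdd : BddAbove (slope F u '' Ico a u) := by
      refine ⟨K, ?_⟩
      rintro _ ⟨x, hx, rfl⟩
      rw [slope_def_field, div_le_iff_of_neg (by linarith [hx.2] : x - u < 0)]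
      have h1 := hKr x ⟨hx.1, hx.2.le⟩
      have h2 : F u = f u := convEnv_right hf hua.le
      nlinarith
    have hsupp : ∀ x ∈ Icc a u, F u + d * (x - u) ≤ F x := by
      intro x hx
      rcases eq_or_lt_of_le hx.2 with h | h
      · simp [h]
      · have hdle : slope F u x ≤ d := le_csSup bdd ⟨x, ⟨hx.1, h⟩, rfl⟩
        rw [slope_def_field, div_le_iff_of_neg (by linarith : x - u < 0)] at hdle
        linarith
    refine ⟨d, ?_, hsupp⟩
    rw [hasDerivWithinAt_iff_tendsto_slope, Icc_sdiff_right,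
      nhdsWithin_Ico_eq_nhdsLT hua]
    exact tendsto_sSup_left hua mono bdd
  · -- interior
    set dm := sSup (slope F u '' Ico a u) with hdm
    set dp := sInf (slope F u '' Ioc u b) with hdp
    have key : ∀ ⦃x⦄, x ∈ Icc a b → x ≠ u → ∀ ⦃y⦄, y ∈ Icc a b → y ≠ u → x ≤ y →
        slope F u x ≤ slope F u y := by
      intro x hx hxu y hy hyu hxy
      rw [slope_def_field, slope_def_field]
      exact hFc.secant_mono hu hx hy hxu hyu hxy
    have monoL : ∀ ⦃x⦄, x ∈ Ico a u → ∀ ⦃y⦄, y ∈ Ico a u → x ≤ y → slope F u x ≤ slope F u y :=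
      fun x hx y hy hxy => key ⟨hx.1, hx.2.le.trans hub.le⟩ (ne_of_lt hx.2)
        ⟨hy.1, hy.2.le.trans hub.le⟩ (ne_of_lt hy.2) hxy
    have monoR : ∀ ⦃x⦄, x ∈ Ioc u b → ∀ ⦃y⦄, y ∈ Ioc u b → x ≤ y → slope F u x ≤ slope F u y :=
      fun x hx y hy hxy => key ⟨hua.le.trans hx.1.le, hx.2⟩ (ne_of_gt hx.1)
        ⟨hua.le.trans hy.1.le, hy.2⟩ (ne_of_gt hy.1) hxy
    have cross : ∀ ⦃x⦄, x ∈ Ico a u → ∀ ⦃y⦄, y ∈ Ioc u b → slope F u x ≤ slope F u y :=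
      fun x hx y hy => key ⟨hx.1, hx.2.le.trans hub.le⟩ (ne_of_lt hx.2)
        ⟨hua.le.trans hy.1.le, hy.2⟩ (ne_of_gt hy.1) (by linarith [hx.2, hy.1])
    have neL : (slope F u '' Ico a u).Nonempty := ⟨slope F u a, a, ⟨le_rfl, hua⟩, rfl⟩
    have neR : (slope F u '' Ioc u b).Nonempty := ⟨slope F u b, b, ⟨hub, le_rfl⟩, rfl⟩
    have bddL : BddAbove (slope F u '' Ico a u) := by
      refine ⟨slope F u b, ?_⟩
      rintro _ ⟨x, hx, rfl⟩
      exact cross hx ⟨hub, le_rfl⟩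
    have bddR : BddBelow (slope F u '' Ioc u b) := by
      refine ⟨slope F u a, ?_⟩
      rintro _ ⟨x, hx, rfl⟩
      exact cross ⟨le_rfl, hua⟩ hx
    have hmp : dm ≤ dp := by
      refine csSup_le neL ?_
      rintro _ ⟨x, hx, rfl⟩
      refine le_csInf neR ?_
      rintro _ ⟨y, hy, rfl⟩
      exact cross hx hy
    have hsupp : ∀ e, dm ≤ e → e ≤ dp → ∀ x ∈ Icc a b, F u + e * (x - u) ≤ F x := by
      intro e hme hep x hx
      rcases lt_trichotomy x u with h | h | h
      · have : slope F u x ≤ dm := le_csSup bddL ⟨x, ⟨hx.1, h⟩, rfl⟩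
        have h2 : slope F u x ≤ e := this.trans hme
        rw [slope_def_field, div_le_iff_of_neg (by linarith : x - u < 0)] at h2
        linarith
      · simp [h]
      · have : dp ≤ slope F u x := csInf_le bddR ⟨x, ⟨h, hx.2⟩, rfl⟩
        have h2 : e ≤ slope F u x := hep.trans this
        rw [slope_def_field, le_div_iff₀ (by linarith : (0:ℝ) < x - u)] at h2
        linarith
    -- show dp ≤ dm via contact points
    have hpq : dp ≤ dm := by
      obtain ⟨p, hp, hfp⟩ := exists_contact_left hf hab.le hu (hsupp dp hmp le_rfl)
      obtain ⟨q, hq, hfq⟩ := exists_contact_right hf hab.le hu (hsupp dm le_rfl hmp)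
      rcases lt_or_eq_of_le hp.2 with hpu | hpu
      · have h1 : F u + dm * (p - u) ≤ F p :=
          hsupp dm le_rfl hmp p ⟨hp.1, hp.2.trans hub.le⟩
        have h2 : F p ≤ f p := convEnv_le hf hab.le ⟨hp.1, hp.2.trans hub.le⟩
        rw [hfp] at h2
        nlinarith
      · rcases lt_or_eq_of_le hq.1 with huq | huq
        · have h1 : F u + dp * (q - u) ≤ F q :=
            hsupp dp hmp le_rfl q ⟨hua.le.trans hq.1, hq.2⟩
          have h2 : F q ≤ f q := convEnv_le hf hab.le ⟨hua.le.trans hq.1, hq.2⟩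
          rw [hfq] at h2
          nlinarith
        · -- p = q = u : local min argument
          have hfu : f u = F u := by
            rw [hpu] at hfp
            simpa [← hF] using hfp
          have hIcc : Icc a b ∈ 𝓝 u := Icc_mem_nhds hua hub
          have haff : ∀ e : ℝ, HasDerivAt (fun x => F u + e * (x - u)) e u := by
            intro e
            simpa using (((hasDerivAt_id u).sub_const u).const_mul e).const_add (F u)
          have hderiv : ∀ e, dm ≤ e → e ≤ dp → deriv f u = e := by
            intro e hme hep
            have hmin : IsLocalMin (fun x => f x - (F u + e * (x - u))) u := by
              refine Filter.eventually_of_mem hIcc fun x hx => ?_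
              have h1 := hsupp e hme hep x hx
              have h2 := convEnv_le hf hab.le hx
              simp only [hfu]
              simp only [hF] at h1 h2 ⊢
              nlinarith
            have hd := hmin.hasDerivAt_eq_zero
              (((hf.differentiable one_ne_zero u).hasDerivAt).sub (haff e))
            linarith [hd]
          have e1 := hderiv dm le_rfl hmp
          have e2 := hderiv dp hmp le_rfl
          rw [← e1, ← e2]
    have heq : dp = dm := le_antisymm hpq hmp
    refine ⟨dm, ?_, hsupp dm le_rfl hmp⟩
    rw [hasDerivWithinAt_iff_tendsto_slope]
    have hmono : 𝓝[Icc a b \ {u}] u ≤ 𝓝[≠] u :=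
      nhdsWithin_mono u (fun x hx => hx.2)
    refine Tendsto.mono_left ?_ hmono
    rw [← nhdsLT_sup_nhdsGT]
    rw [tendsto_sup]
    constructor
    · exact tendsto_sSup_left hua monoL bddL
    · have := tendsto_sInf_right hub monoR bddR
      rwa [← hdp, heq] at this

lemma le_of_forall_pos_le_add' {x y : ℝ} (h : ∀ ε > 0, x ≤ y + ε) : x ≤ y := by
  by_contra hc
  push_neg at hc
  have := h ((x - y)/2) (by linarith)
  linarith

lemma key_le (f g : ℝ → ℝ) {a b u : ℝ} (M : ℝ)
    (hf : ContDiff ℝ 1 f) (hg : ContDiff ℝ 1 g) (hab : a < b)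
    (hM : ∀ x : ℝ, |deriv f x - deriv g x| ≤ M) (hu : u ∈ Icc a b) :
    derivWithin (convEnv f a b) (Icc a b) u - derivWithin (convEnv g a b) (Icc a b) u ≤ M := by
  obtain ⟨dF, hdF, hsF⟩ := exists_deriv hf hab hu
  obtain ⟨dG, hdG, hsG⟩ := exists_deriv hg hab hu
  rw [hdF.derivWithin ((uniqueDiffOn_Icc hab) u hu),
    hdG.derivWithin ((uniqueDiffOn_Icc hab) u hu)]
  have hdf : ∀ x : ℝ, DifferentiableAt ℝ f x := fun x => (hf.differentiable one_ne_zero).differentiableAt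
  have hdg : ∀ x : ℝ, DifferentiableAt ℝ g x := fun x => (hg.differentiable one_ne_zero).differentiableAt
  have hMVT : ∀ p q : ℝ, p ≤ q → (f q - g q) - (f p - g p) ≤ M * (q - p) := by
    intro p q hpq
    have hb : ∀ x ∈ (univ : Set ℝ), ‖deriv (fun y => f y - g y) x‖ ≤ M := by
      intro x _
      rw [deriv_fun_sub (hdf x) (hdg x)]
      simpa [Real.norm_eq_abs] using hM x
    have := convex_univ.norm_image_sub_le_of_norm_deriv_le (f := fun y => f y - g y)
      (fun x _ => (hdf x).sub (hdg x)) hb (mem_univ p) (mem_univ q)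
    rw [Real.norm_eq_abs, Real.norm_eq_abs, abs_of_nonneg (by linarith : (0:ℝ) ≤ q - p)] at this
    linarith [(abs_le.1 this).2]
  rcases eq_or_lt_of_le hu.1 with hua | hua
  · -- u = a
    subst hua
    clear hu
    have hFa : convEnv f a b a = f a := convEnv_left hf hab.le
    have hGa : convEnv g a b a = g a := convEnv_left hg hab.le
    set S := (fun y => (g y - g a) / (y - a)) '' Ioc a b with hS
    have hSne : S.Nonempty := ⟨_, b, ⟨hab, le_rfl⟩, rfl⟩
    obtain ⟨Kg, hKg0, hKg⟩ := exists_lip hg hab.le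
    have hSbdd : BddBelow S := by
      refine ⟨-Kg, ?_⟩
      rintro _ ⟨y, hy, rfl⟩
      have hya : (0:ℝ) < y - a := by linarith [hy.1]
      rw [le_div_iff₀ hya]
      have := (abs_le.1 (hKg y ⟨hy.1.le, hy.2⟩ a (left_mem_Icc.2 hab.le))).1
      rw [abs_of_nonneg (by linarith : (0:ℝ) ≤ y - a)] at this
      linarith
    set s := sInf S with hs
    have hGlow : ∀ x ∈ Icc a b, g a + s * (x - a) ≤ convEnv g a b x := by
      intro x hx
      have hconv := convexOn_affine s (g a - s * a) (convex_Icc a b)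
      have hmin : ∀ y ∈ Icc a b, (fun y => s * y + (g a - s * a)) y ≤ g y := by
        intro y hy
        rcases eq_or_lt_of_le hy.1 with h | h
        · show s * y + (g a - s * a) ≤ g y
          rw [← h]; linarith
        · have hcle := csInf_le hSbdd ⟨y, ⟨h, hy.2⟩, rfl⟩
          rw [← hs, le_div_iff₀ (by linarith : (0:ℝ) < y - a)] at hcle
          show s * y + (g a - s * a) ≤ g y
          linarith
      have := le_convEnv hconv hmin hx
      linarith
    have hdGs : s ≤ dG := by
      have ht := hasDerivWithinAt_iff_tendsto_slope.1 hdG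
      rw [Icc_sdiff_left, nhdsWithin_Ioc_eq_nhdsGT hab] at ht
      refine ge_of_tendsto ht ?_
      filter_upwards [Ioo_mem_nhdsGT_of_mem (α := ℝ) ⟨le_refl a, hab⟩] with x hx
      rw [slope_def_field, le_div_iff₀ (by linarith [hx.1] : (0:ℝ) < x - a)]
      have h1 := hGlow x ⟨hx.1.le, hx.2.le⟩
      rw [hGa]
      linarith
    have hdFle : ∀ y, y ∈ Ioc a b → dF * (y - a) ≤ f y - f a := by
      intro y hy
      have h1 := hsF y ⟨hy.1.le, hy.2⟩
      have h2 := convEnv_le hf hab.le (⟨hy.1.le, hy.2⟩ : y ∈ Icc a b)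
      rw [hFa] at h1
      linarith
    refine le_of_forall_pos_le_add' ?_
    intro ε hε
    obtain ⟨_, ⟨y, hy, rfl⟩, hlt⟩ := exists_lt_of_csInf_lt hSne
      (lt_add_of_pos_right (sInf S) hε)
    have h1 := hdFle y hy
    have h2 := hMVT a y (by linarith [hy.1] : a ≤ y)
    have hya : (0:ℝ) < y - a := by linarith [hy.1]
    have h4 : dF ≤ (f y - f a) / (y - a) := by rw [le_div_iff₀ hya]; exact h1
    have h5 : (f y - f a) / (y - a) - (g y - g a) / (y - a) ≤ M := by
      rw [div_sub_div_same, div_le_iff₀ hya]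
      linarith
    have h3 : (g y - g a) / (y - a) < s + ε := by rw [hs]; exact hlt
    linarith
  rcases eq_or_lt_of_le hu.2 with hub | hub
  · -- u = b
    subst hub
    clear hu
    have hFb : convEnv f a u u = f u := convEnv_right hf hua.le
    have hGb : convEnv g a u u = g u := convEnv_right hg hua.le
    set S := (fun y => (f u - f y) / (u - y)) '' Ico a u with hS
    have hSne : S.Nonempty := ⟨_, a, ⟨le_rfl, hua⟩, rfl⟩
    obtain ⟨Kf, hKf0, hKf⟩ := exists_lip hf hua.le
    have hSbdd : BddAbove S := by
      refine ⟨Kf, ?_⟩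
      rintro _ ⟨y, hy, rfl⟩
      have hyu : (0:ℝ) < u - y := by linarith [hy.2]
      rw [div_le_iff₀ hyu]
      have := (abs_le.1 (hKf u (right_mem_Icc.2 hua.le) y ⟨hy.1, hy.2.le⟩)).2
      rw [abs_of_nonneg (by linarith : (0:ℝ) ≤ u - y)] at this
      linarith
    set s := sSup S with hs
    have hFlow : ∀ x ∈ Icc a u, f u + s * (x - u) ≤ convEnv f a u x := by
      intro x hx
      have hconv := convexOn_affine s (f u - s * u) (convex_Icc a u)
      have hmin : ∀ y ∈ Icc a u, (fun y => s * y + (f u - s * u)) y ≤ f y := by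
        intro y hy
        rcases eq_or_lt_of_le hy.2 with h | h
        · show s * y + (f u - s * u) ≤ f y
          rw [h]; linarith
        · have hcle := le_csSup hSbdd ⟨y, ⟨hy.1, h⟩, rfl⟩
          rw [← hs, div_le_iff₀ (by linarith : (0:ℝ) < u - y)] at hcle
          show s * y + (f u - s * u) ≤ f y
          linarith
      have := le_convEnv hconv hmin hx
      linarith
    have hdFs : dF ≤ s := by
      have ht := hasDerivWithinAt_iff_tendsto_slope.1 hdF
      rw [Icc_sdiff_right, nhdsWithin_Ico_eq_nhdsLT hua] at ht
      refine le_of_tendsto ht ?_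
      filter_upwards [Ioo_mem_nhdsLT_of_mem (α := ℝ) ⟨hua, le_refl u⟩] with x hx
      rw [slope_def_field, div_le_iff_of_neg (by linarith [hx.2] : x - u < 0)]
      have h1 := hFlow x ⟨hx.1.le, hx.2.le⟩
      rw [hFb]
      nlinarith
    have hdGle : ∀ y, y ∈ Ico a u → dG * (y - u) ≤ g y - g u := by
      intro y hy
      have h1 := hsG y ⟨hy.1, hy.2.le⟩
      have h2 := convEnv_le hg hua.le (⟨hy.1, hy.2.le⟩ : y ∈ Icc a u)
      rw [hGb] at h1
      linarith
    refine le_of_forall_pos_le_add' ?_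
    intro ε hε
    obtain ⟨_, ⟨y, hy, rfl⟩, hlt⟩ := exists_lt_of_lt_csSup hSne
      (by linarith : sSup S - ε < sSup S)
    have h1 := hdGle y hy
    have h2 := hMVT y u (by linarith [hy.2] : y ≤ u)
    have hyu : (0:ℝ) < u - y := by linarith [hy.2]
    have h4 : (g u - g y) / (u - y) ≤ dG := by
      rw [div_le_iff₀ hyu]; nlinarith
    have h5 : (f u - f y) / (u - y) - (g u - g y) / (u - y) ≤ M := by
      rw [div_sub_div_same, div_le_iff₀ hyu]
      linarith
    have h3 : s - ε < (f u - f y) / (u - y) := by rw [hs]; exact hlt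
    linarith
  · -- interior
    obtain ⟨p, hp, hfp⟩ := exists_contact_left hf hab.le hu hsF
    obtain ⟨q, hq, hfq⟩ := exists_contact_right hg hab.le hu hsG
    rcases lt_or_ge p q with hpq | hpq
    · -- main case
      have hqI : q ∈ Icc a b := ⟨hua.le.trans hq.1, hq.2⟩
      have hpI : p ∈ Icc a b := ⟨hp.1, hp.2.trans hub.le⟩
      have h1 : convEnv f a b u + dF * (q - u) ≤ convEnv f a b q := hsF q hqI
      have h2 : convEnv f a b q ≤ f q := convEnv_le hf hab.le hqI
      have h3 : convEnv g a b u + dG * (p - u) ≤ convEnv g a b p := hsG p hpI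
      have h4 : convEnv g a b p ≤ g p := convEnv_le hg hab.le hpI
      have h5 := hMVT p q hpq.le
      -- dF * (q - p) ≤ f q - f p ; g q - g p ≤ dG * (q - p)
      have hA : dF * (q - p) ≤ f q - f p := by
        rw [hfp]; linarith [h1.trans h2]
      have hB : g q - g p ≤ dG * (q - p) := by
        rw [hfq]; nlinarith [h3.trans h4]
      have hqp : (0:ℝ) < q - p := by linarith
      nlinarith
    · -- p = q = u
      have hpu : p = u := le_antisymm hp.2 (hq.1.trans hpq)
      have hqu : q = u := le_antisymm (hpq.trans hp.2) hq.1
      have hfu : f u = convEnv f a b u := by rw [hpu] at hfp; simpa using hfp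
      have hgu : g u = convEnv g a b u := by rw [hqu] at hfq; simpa using hfq
      -- dF ≤ deriv f u
      have hdF' : dF ≤ deriv f u := by
        have ht := hasDerivAt_iff_tendsto_slope.1 (hdf u).hasDerivAt
        have ht' : Tendsto (slope f u) (𝓝[>] u) (𝓝 (deriv f u)) :=
          ht.mono_left (nhdsWithin_mono u (fun x hx => ne_of_gt hx))
        refine ge_of_tendsto ht' ?_
        filter_upwards [Ioo_mem_nhdsGT_of_mem (α := ℝ) ⟨le_refl u, hub⟩] with x hx
        rw [slope_def_field, le_div_iff₀ (by linarith [hx.1] : (0:ℝ) < x - u)]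
        have h1 := hsF x ⟨hua.le.trans hx.1.le, hx.2.le⟩
        have h2 := convEnv_le hf hab.le (⟨hua.le.trans hx.1.le, hx.2.le⟩ : x ∈ Icc a b)
        rw [← hfu] at h1
        linarith
      -- deriv g u ≤ dG
      have hdG' : deriv g u ≤ dG := by
        have ht := hasDerivAt_iff_tendsto_slope.1 (hdg u).hasDerivAt
        have ht' : Tendsto (slope g u) (𝓝[<] u) (𝓝 (deriv g u)) :=
          ht.mono_left (nhdsWithin_mono u (fun x hx => ne_of_lt hx))
        refine le_of_tendsto ht' ?_
        filter_upwards [Ioo_mem_nhdsLT_of_mem (α := ℝ) ⟨hua, le_refl u⟩] with x hx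
        rw [slope_def_field, div_le_iff_of_neg (by linarith [hx.2] : x - u < 0)]
        have h1 := hsG x ⟨hx.1.le, hx.2.le.trans hub.le⟩
        have h2 := convEnv_le hg hab.le (⟨hx.1.le, hx.2.le.trans hub.le⟩ : x ∈ Icc a b)
        rw [← hgu] at h1
        nlinarith
      have := (abs_le.1 (hM u)).2
      linarith

end CEAux

theorem convEnv_deriv_diff_le_deriv_diff (f g : ℝ → ℝ) (a b M : ℝ)
    (hf : ContDiff ℝ 1 f) (hg : ContDiff ℝ 1 g) (hab : a < b)
    (hM : ∀ x : ℝ, |deriv f x - deriv g x| ≤ M) :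
    ∀ u ∈ Set.Icc a b,
      |derivWithin (convEnv f a b) (Set.Icc a b) u -
        derivWithin (convEnv g a b) (Set.Icc a b) u| ≤ M := by
  intro u hu
  have h1 := CEAux.key_le f g M hf hg hab hM hu
  have h2 := CEAux.key_le g f M hg hf hab
    (fun x => by rw [abs_sub_comm]; exact hM x) hu
  rw [abs_le]
  constructor <;> linarith
end

section
/- For real numbers a ≤ ξ ≤ b with a < b, the double integral ∫_a^ξ ∫_ξ^b 1/(w' − w) dw' dw is at most log(2)·(b − a). -/
open MeasureTheory intervalIntegral Set Real

/-- log is interval integrable on `[0, c]` for `0 ≤ c`. -/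
lemma logIntegrable (c : ℝ) (hc : 0 ≤ c) :
    IntervalIntegrable Real.log volume 0 c := by
  have key : ∀ d : ℝ, 0 ≤ d → d ≤ 1 → IntervalIntegrable Real.log volume 0 d := by
    intro d hd0 hd1
    have hcont : ContinuousOn (fun x : ℝ => x - x * Real.log x) (Icc 0 d) :=
      (continuous_id.sub Real.continuous_mul_log).continuousOn
    have hderiv : ∀ x ∈ Ioo (0:ℝ) d, HasDerivAt (fun x : ℝ => x - x * Real.log x)
        (-Real.log x) x := by
      intro x hx
      have h := (Real.hasDerivAt_mul_log (ne_of_gt hx.1))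
      have : HasDerivAt (fun x : ℝ => x - x * Real.log x) (1 - (Real.log x + 1)) x :=
        (hasDerivAt_id x).sub h
      convert this using 1
      ring
    have hpos : ∀ x ∈ Ioo (0:ℝ) d, 0 ≤ -Real.log x := by
      intro x hx
      have : Real.log x ≤ 0 := Real.log_nonpos hx.1.le (hx.2.le.trans hd1)
      linarith
    have hint : IntegrableOn (fun x => -Real.log x) (Ioc 0 d) :=
      integrableOn_deriv_of_nonneg hcont hderiv hpos
    have hint2 : IntegrableOn Real.log (Ioc 0 d) := by
      have heq : Real.log = fun x : ℝ => -(-Real.log x) := by funext x; ring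
      rw [heq]
      exact hint.neg
    exact (intervalIntegrable_iff_integrableOn_Ioc_of_le hd0).2 hint2
  rcases le_or_gt c 1 with h | h
  · exact key c hc h
  · exact (key 1 zero_le_one le_rfl).trans
      (intervalIntegrable_log (by
        intro h0
        rw [Set.uIcc_of_le (by linarith)] at h0
        exact absurd h0.1 (by norm_num)))

/-- `∫ x in 0..c, log x = c * log c - c` for `0 ≤ c`. -/
lemma integral_log_from_zero' (c : ℝ) (hc : 0 ≤ c) :
    (∫ x in (0:ℝ)..c, Real.log x) = c * Real.log c - c := by
  have hcont : ContinuousOn (fun x : ℝ => x * Real.log x - x) (Icc 0 c) :=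
    (Real.continuous_mul_log.sub continuous_id).continuousOn
  have hderiv : ∀ x ∈ Ioo (0:ℝ) c, HasDerivWithinAt (fun x : ℝ => x * Real.log x - x)
      (Real.log x) (Ioi x) x := by
    intro x hx
    have h : HasDerivAt (fun x : ℝ => x * Real.log x - x) (Real.log x + 1 - 1) x :=
      (Real.hasDerivAt_mul_log (ne_of_gt hx.1)).sub (hasDerivAt_id x)
    have h2 : HasDerivAt (fun x : ℝ => x * Real.log x - x) (Real.log x) x := by
      convert h using 1; ring
    exact h2.hasDerivWithinAt
  have := integral_eq_sub_of_hasDeriv_right_of_le hc hcont hderiv (logIntegrable c hc)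
  simpa using this

/-- The entropy-type inequality. -/
lemma entropy_bound (x y : ℝ) (hx : 0 < x) (hy : 0 < y) :
    (x + y) * Real.log (x + y) - x * Real.log x - y * Real.log y
      ≤ Real.log 2 * (x + y) := by
  have e1 : Real.log (x + y) = Real.log 2 + Real.log ((x + y) / 2) := by
    conv_lhs => rw [show x + y = 2 * ((x + y) / 2) from by ring]
    rw [Real.log_mul two_ne_zero (by positivity)]
  have e2 : Real.log ((x + y) / (2 * x)) = Real.log ((x + y) / 2) - Real.log x := by
    rw [show (x + y) / (2 * x) = ((x + y) / 2) / x from (div_div _ _ _).symm,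
      Real.log_div (by positivity) (ne_of_gt hx)]
  have e3 : Real.log ((x + y) / (2 * y)) = Real.log ((x + y) / 2) - Real.log y := by
    rw [show (x + y) / (2 * y) = ((x + y) / 2) / y from (div_div _ _ _).symm,
      Real.log_div (by positivity) (ne_of_gt hy)]
  have b1 : Real.log ((x + y) / (2 * x)) ≤ (x + y) / (2 * x) - 1 :=
    Real.log_le_sub_one_of_pos (by positivity)
  have b2 : Real.log ((x + y) / (2 * y)) ≤ (x + y) / (2 * y) - 1 :=
    Real.log_le_sub_one_of_pos (by positivity)
  have m1 : x * Real.log ((x + y) / (2 * x)) ≤ (x + y) / 2 - x := by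
    have := mul_le_mul_of_nonneg_left b1 hx.le
    have hxx : x * ((x + y) / (2 * x) - 1) = (x + y) / 2 - x := by
      field_simp
    linarith [hxx ▸ this]
  have m2 : y * Real.log ((x + y) / (2 * y)) ≤ (x + y) / 2 - y := by
    have := mul_le_mul_of_nonneg_left b2 hy.le
    have hyy : y * ((x + y) / (2 * y) - 1) = (x + y) / 2 - y := by
      field_simp
    linarith [hyy ▸ this]
  rw [e2] at m1
  rw [e3] at m2
  nlinarith [m1, m2, e1]

theorem double_integral_log_two_bound (a ξ b : ℝ)
    (h1 : a ≤ ξ) (h2 : ξ ≤ b) (hab : a < b) :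
    (∫ w in a..ξ, ∫ w' in ξ..b, 1 / (w' - w)) ≤ Real.log 2 * (b - a) := by
  have hlog2 : 0 < Real.log 2 := Real.log_pos (by norm_num)
  rcases eq_or_lt_of_le h1 with rfl | haξ
  · simp only [intervalIntegral.integral_same]
    nlinarith
  rcases eq_or_lt_of_le h2 with rfl | hξb
  · simp only [intervalIntegral.integral_same, intervalIntegral.integral_zero]
    nlinarith
  -- main case: a < ξ < b
  have hcongr : (∫ w in a..ξ, ∫ w' in ξ..b, 1 / (w' - w))
      = ∫ w in a..ξ, (Real.log (b - w) - Real.log (ξ - w)) := by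
    apply intervalIntegral.integral_congr_ae
    have hae : ∀ᵐ (x : ℝ), x ≠ ξ := by
      rw [Filter.eventually_iff, MeasureTheory.mem_ae_iff]
      have : {x : ℝ | x ≠ ξ}ᶜ = {ξ} := by ext z; simp
      rw [this]
      exact Real.volume_singleton
    filter_upwards [hae] with w hw hmem
    rw [Set.uIoc_of_le h1] at hmem
    have hwξ : w < ξ := lt_of_le_of_ne hmem.2 hw
    have hwb : w < b := lt_of_lt_of_le hwξ h2
    have key : (∫ w' in ξ..b, 1 / (w' - w)) = ∫ u in (ξ - w)..(b - w), 1 / u :=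
      intervalIntegral.integral_comp_sub_right (fun u => 1 / u) w
    rw [key, integral_one_div, Real.log_div (by linarith) (by linarith)]
    intro h0
    rw [Set.uIcc_of_le (by linarith)] at h0
    linarith [h0.1]
  rw [hcongr]
  have hInt1 : IntervalIntegrable (fun w => Real.log (b - w)) volume a ξ := by
    apply ContinuousOn.intervalIntegrable
    apply ContinuousOn.log (by fun_prop)
    intro z hz
    rw [Set.uIcc_of_le h1] at hz
    have : z ≤ ξ := hz.2
    intro h0; linarith [(sub_eq_zero.mp h0)]
  have hInt2 : IntervalIntegrable (fun w => Real.log (ξ - w)) volume a ξ := by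
    have := ((logIntegrable (ξ - a) (by linarith)).comp_sub_left ξ).symm
    simpa using this
  rw [intervalIntegral.integral_sub hInt1 hInt2]
  have hI1 : (∫ w in a..ξ, Real.log (b - w))
      = (b - a) * Real.log (b - a) - (b - ξ) * Real.log (b - ξ) - (b - a) + (b - ξ) := by
    rw [intervalIntegral.integral_comp_sub_left Real.log b, integral_log]
  have hI2 : (∫ w in a..ξ, Real.log (ξ - w)) = (ξ - a) * Real.log (ξ - a) - (ξ - a) := by
    rw [intervalIntegral.integral_comp_sub_left Real.log ξ]
    simpa using integral_log_from_zero' (ξ - a) (by linarith)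
  rw [hI1, hI2]
  have := entropy_bound (ξ - a) (b - ξ) (by linarith) (by linarith)
  have hxy : ξ - a + (b - ξ) = b - a := by ring
  rw [hxy] at this
  linarith
end

section
/- The piecewise affine interpolation with grid size ε of a C^{1,1} function satisfies the same convex-envelope comparison: for C¹ functions f, g with piecewise affine interpolations f_ε, g_ε agreeing with f, g on εℤ, the sup norm of the difference of derivatives (taken where defined) of conv_{[a,b]} f_ε and conv_{[a,b]} g_ε is at most ‖f' − g'‖_∞, where a, b ∈ εℤ. -/
open Set Filter Topology

/-- Piecewise affine interpolation of `f` with grid size `ε`: agrees with `f`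
at all points `m * ε`, `m ∈ ℤ`, and is affine in between. -/
noncomputable def pwAffine (ε : ℝ) (f : ℝ → ℝ) (x : ℝ) : ℝ :=
  f ((⌊x / ε⌋ : ℤ) * ε) +
    ((x - (⌊x / ε⌋ : ℤ) * ε) / ε) *
      (f (((⌊x / ε⌋ : ℤ) + 1) * ε) - f ((⌊x / ε⌋ : ℤ) * ε))

namespace CEaux


lemma convexOn_affine (s : Set ℝ) (hs : Convex ℝ s) (C m x₀ : ℝ) :
    ConvexOn ℝ s (fun t => C + m * (t - x₀)) := by
  refine ⟨hs, fun x _ y _ p q hp hq hpq => le_of_eq ?_⟩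
  simp only [smul_eq_mul]
  have : p = 1 - q := by linarith
  subst this; ring

lemma pwAffine_cell {ε : ℝ} (hε : 0 < ε) (F : ℝ → ℝ) (m : ℤ) {z : ℝ}
    (h1 : (m : ℝ) * ε ≤ z) (h2 : z ≤ ((m : ℝ) + 1) * ε) :
    pwAffine ε F z
      = F ((m : ℝ) * ε) + ((z - (m : ℝ) * ε) / ε) * (F (((m : ℝ) + 1) * ε) - F ((m : ℝ) * ε)) := by
  rcases lt_or_eq_of_le h2 with h2' | h2'
  · have hfl : ⌊z / ε⌋ = m := by
      rw [Int.floor_eq_iff]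
      constructor
      · exact (le_div_iff₀ hε).2 (by linarith)
      · exact_mod_cast (div_lt_iff₀ hε).2 (by push_cast; linarith)
    unfold pwAffine
    rw [hfl]
  · subst h2'
    have hεne : ε ≠ 0 := ne_of_gt hε
    have hz : (((m : ℝ) + 1) * ε) / ε = ((m + 1 : ℤ) : ℝ) := by push_cast; field_simp
    unfold pwAffine
    rw [hz, Int.floor_intCast]
    push_cast
    field_simp
    ring

lemma pwAffine_cell_slope {ε K : ℝ} (hε : 0 < ε) (F : ℝ → ℝ) (m : ℤ)
    (hS : |F (((m : ℝ) + 1) * ε) - F ((m : ℝ) * ε)| ≤ K * ε) {x y : ℝ}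
    (hx : (m : ℝ) * ε ≤ x) (hxy : x ≤ y) (hy : y ≤ ((m : ℝ) + 1) * ε) :
    |pwAffine ε F y - pwAffine ε F x| ≤ K * (y - x) := by
  rw [pwAffine_cell hε F m (hx.trans hxy) hy, pwAffine_cell hε F m hx (hxy.trans hy)]
  have heq : F ((m:ℝ)*ε) + ((y - (m:ℝ)*ε)/ε) * (F (((m:ℝ)+1)*ε) - F ((m:ℝ)*ε))
      - (F ((m:ℝ)*ε) + ((x - (m:ℝ)*ε)/ε) * (F (((m:ℝ)+1)*ε) - F ((m:ℝ)*ε)))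
      = ((y - x)/ε) * (F (((m:ℝ)+1)*ε) - F ((m:ℝ)*ε)) := by ring
  rw [heq, abs_mul, abs_div, abs_of_nonneg (by linarith : (0:ℝ) ≤ y - x), abs_of_pos hε]
  calc (y - x)/ε * |F (((m:ℝ)+1)*ε) - F ((m:ℝ)*ε)| ≤ (y - x)/ε * (K * ε) := by
        apply mul_le_mul_of_nonneg_left hS
        exact div_nonneg (by linarith) hε.le
    _ = K * (y - x) := by field_simp

lemma pwAffine_lip {ε K : ℝ} (hε : 0 < ε) (F : ℝ → ℝ) (p q : ℤ)
    (hcell : ∀ m : ℤ, p ≤ m → m < q → |F (((m : ℝ) + 1) * ε) - F ((m : ℝ) * ε)| ≤ K * ε) :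
    ∀ x ∈ Icc ((p : ℝ) * ε) ((q : ℝ) * ε), ∀ y ∈ Icc ((p : ℝ) * ε) ((q : ℝ) * ε), x ≤ y →
      |pwAffine ε F y - pwAffine ε F x| ≤ K * (y - x) := by
  suffices aux : ∀ j : ℕ, ∀ x ∈ Icc ((p : ℝ) * ε) ((q : ℝ) * ε),
      ∀ y ∈ Icc ((p : ℝ) * ε) ((q : ℝ) * ε), x ≤ y → ⌊y / ε⌋ - ⌊x / ε⌋ ≤ (j : ℤ) →
      |pwAffine ε F y - pwAffine ε F x| ≤ K * (y - x) by
    intro x hx y hy hxy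
    refine aux (⌊y / ε⌋ - ⌊x / ε⌋).toNat x hx y hy hxy ?_
    exact Int.self_le_toNat _
  intro j
  induction j with
  | zero =>
    intro x hx y hy hxy hj
    rcases eq_or_lt_of_le hy.2 with hyb | hyb
    · rcases eq_or_lt_of_le (hxy.trans_eq hyb) with hxb | hxb
      · rw [hxb, ← hyb]
        simp
      · -- x < qε, same cell
        have hm1 : p ≤ ⌊x / ε⌋ := Int.le_floor.2 ((le_div_iff₀ hε).2 hx.1)
        have hm2 : ⌊x / ε⌋ < q := Int.floor_lt.2 ((div_lt_iff₀ hε).2 hxb)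
        refine pwAffine_cell_slope hε F ⌊x / ε⌋ (hcell _ hm1 hm2) ?_ hxy ?_
        · exact (le_div_iff₀ hε).1 (Int.floor_le _)
        · have : ⌊y / ε⌋ ≤ ⌊x / ε⌋ := by omega
          have h2 : y / ε < (⌊x / ε⌋ : ℝ) + 1 := by
            calc y / ε < ⌊y / ε⌋ + 1 := Int.lt_floor_add_one _
              _ ≤ (⌊x / ε⌋ : ℝ) + 1 := by exact_mod_cast by omega
          linarith [(div_lt_iff₀ hε).1 h2]
    · have hm1 : p ≤ ⌊x / ε⌋ := Int.le_floor.2 ((le_div_iff₀ hε).2 hx.1)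
      have hm2 : ⌊x / ε⌋ < q := Int.floor_lt.2 ((div_lt_iff₀ hε).2 (lt_of_le_of_lt hxy hyb))
      refine pwAffine_cell_slope hε F ⌊x / ε⌋ (hcell _ hm1 hm2) ?_ hxy ?_
      · exact (le_div_iff₀ hε).1 (Int.floor_le _)
      · have : ⌊y / ε⌋ ≤ ⌊x / ε⌋ := by omega
        have h2 : y / ε < (⌊x / ε⌋ : ℝ) + 1 := by
          calc y / ε < ⌊y / ε⌋ + 1 := Int.lt_floor_add_one _
            _ ≤ (⌊x / ε⌋ : ℝ) + 1 := by exact_mod_cast by omega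
        linarith [(div_lt_iff₀ hε).1 h2]
  | succ j ih =>
    intro x hx y hy hxy hj
    rcases le_or_gt ⌊y / ε⌋ ⌊x / ε⌋ with hfl | hfl
    · -- same cell case, reuse
      rcases eq_or_lt_of_le (hxy.trans hy.2) with hxb | hxb
      · have hyb : y = (q : ℝ) * ε := le_antisymm hy.2 (hxb ▸ hxy)
        rw [hyb, ← hxb]
        simp
      · have hm1 : p ≤ ⌊x / ε⌋ := Int.le_floor.2 ((le_div_iff₀ hε).2 hx.1)
        have hm2 : ⌊x / ε⌋ < q := Int.floor_lt.2 ((div_lt_iff₀ hε).2 hxb)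
        refine pwAffine_cell_slope hε F ⌊x / ε⌋ (hcell _ hm1 hm2) ?_ hxy ?_
        · exact (le_div_iff₀ hε).1 (Int.floor_le _)
        · have h2 : y / ε < (⌊x / ε⌋ : ℝ) + 1 := by
            calc y / ε < ⌊y / ε⌋ + 1 := Int.lt_floor_add_one _
              _ ≤ (⌊x / ε⌋ : ℝ) + 1 := by exact_mod_cast by omega
          linarith [(div_lt_iff₀ hε).1 h2]
    · set z : ℝ := ((⌊x / ε⌋ : ℝ) + 1) * ε with hzdef
      have hxz : x ≤ z := by
        have := Int.lt_floor_add_one (x / ε)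
        have := (div_lt_iff₀ hε).1 this
        linarith
      have hxz' : x < z := by
        have := Int.lt_floor_add_one (x / ε)
        have := (div_lt_iff₀ hε).1 this
        linarith
      have hzy : z ≤ y := by
        have h1 : (⌊x / ε⌋ : ℝ) + 1 ≤ (⌊y / ε⌋ : ℝ) := by exact_mod_cast by omega
        have h2 : (⌊y / ε⌋ : ℝ) ≤ y / ε := Int.floor_le _
        have := (le_div_iff₀ hε).1 (h1.trans h2)
        linarith
      have hzmem : z ∈ Icc ((p : ℝ) * ε) ((q : ℝ) * ε) := ⟨hx.1.trans hxz, hzy.trans hy.2⟩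
      have hflz : ⌊z / ε⌋ = ⌊x / ε⌋ + 1 := by
        have : z / ε = ((⌊x / ε⌋ + 1 : ℤ) : ℝ) := by
          push_cast; field_simp; rw [hzdef]; ring
        rw [this, Int.floor_intCast]
      have hstep1 : |pwAffine ε F z - pwAffine ε F x| ≤ K * (z - x) := by
        have hm1 : p ≤ ⌊x / ε⌋ := Int.le_floor.2 ((le_div_iff₀ hε).2 hx.1)
        have hm2 : ⌊x / ε⌋ < q := Int.floor_lt.2 ((div_lt_iff₀ hε).2 (lt_of_lt_of_le hxz' hzmem.2))
        exact pwAffine_cell_slope hε F ⌊x / ε⌋ (hcell _ hm1 hm2)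
          ((le_div_iff₀ hε).1 (Int.floor_le _)) hxz le_rfl
      have hstep2 : |pwAffine ε F y - pwAffine ε F z| ≤ K * (y - z) := by
        refine ih z hzmem y hy hzy ?_
        rw [hflz]; omega
      calc |pwAffine ε F y - pwAffine ε F x|
          ≤ |pwAffine ε F y - pwAffine ε F z| + |pwAffine ε F z - pwAffine ε F x| :=
            abs_sub_le _ _ _
        _ ≤ K * (y - z) + K * (z - x) := add_le_add hstep2 hstep1
        _ = K * (y - x) := by ring







variable {φ : ℝ → ℝ} {a b : ℝ}

lemma env_bddAbove {u : ℝ} (hu : u ∈ Icc a b) :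
    BddAbove {y : ℝ | ∃ c : ℝ → ℝ, ConvexOn ℝ (Set.Icc a b) c ∧
      (∀ x ∈ Set.Icc a b, c x ≤ φ x) ∧ c u = y} := by
  refine ⟨φ u, ?_⟩
  rintro y ⟨c, hc, hle, rfl⟩
  exact hle u hu

lemma env_ge (c : ℝ → ℝ) (hc : ConvexOn ℝ (Set.Icc a b) c)
    (hle : ∀ x ∈ Set.Icc a b, c x ≤ φ x) {u : ℝ} (hu : u ∈ Icc a b) :
    c u ≤ convEnv φ a b u :=
  le_csSup (env_bddAbove hu) ⟨c, hc, hle, rfl⟩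

lemma env_le_s18 (c₀ : ℝ → ℝ) (hc₀ : ConvexOn ℝ (Set.Icc a b) c₀)
    (hle₀ : ∀ x ∈ Set.Icc a b, c₀ x ≤ φ x) {u : ℝ} (hu : u ∈ Icc a b) :
    convEnv φ a b u ≤ φ u := by
  refine csSup_le ⟨c₀ u, c₀, hc₀, hle₀, rfl⟩ ?_
  rintro y ⟨c, hc, hle, rfl⟩
  exact hle u hu

lemma env_convex (c₀ : ℝ → ℝ) (hc₀ : ConvexOn ℝ (Set.Icc a b) c₀)
    (hle₀ : ∀ x ∈ Set.Icc a b, c₀ x ≤ φ x) :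
    ConvexOn ℝ (Set.Icc a b) (convEnv φ a b) := by
  refine ⟨convex_Icc a b, fun x hx y hy p q hp hq hpq => ?_⟩
  refine csSup_le ⟨c₀ (p • x + q • y), c₀, hc₀, hle₀, rfl⟩ ?_
  rintro w ⟨c, hc, hle, rfl⟩
  calc c (p • x + q • y) ≤ p • c x + q • c y := hc.2 hx hy hp hq hpq
    _ ≤ p • convEnv φ a b x + q • convEnv φ a b y := by
        simp only [smul_eq_mul]
        have h1 : c x ≤ convEnv φ a b x := env_ge c hc hle hx
        have h2 : c y ≤ convEnv φ a b y := env_ge c hc hle hy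
        have := mul_le_mul_of_nonneg_left h1 hp
        have := mul_le_mul_of_nonneg_left h2 hq
        linarith

lemma support_line {F : ℝ → ℝ} {u r : ℝ} (hF : ConvexOn ℝ (Icc a b) F)
    (hu : u ∈ Icc a b) (hd : HasDerivWithinAt F r (Icc a b) u) :
    ∀ t ∈ Icc a b, F u + r * (t - u) ≤ F t := by
  intro t ht
  have hslope := hasDerivWithinAt_iff_tendsto_slope.1 hd
  rcases lt_trichotomy t u with h | h | h
  · -- t < u : show (F u - F t)/(u - t) ≤ r
    have hsub : Ioo t u ⊆ Icc a b \ {u} := fun s hs =>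
      ⟨⟨ht.1.trans hs.1.le, hs.2.le.trans hu.2⟩, ne_of_lt hs.2⟩
    have htend : Tendsto (slope F u) (𝓝[Ioo t u] u) (𝓝 r) :=
      hslope.mono_left (nhdsWithin_mono _ hsub)
    have hne : (𝓝[Ioo t u] u).NeBot := by
      rw [← mem_closure_iff_nhdsWithin_neBot, closure_Ioo (ne_of_lt h)]
      exact ⟨h.le, le_rfl⟩
    have hev : ∀ s ∈ Ioo t u, (F t - F u) / (t - u) ≤ slope F u s := by
      intro s hs
      rw [slope_def_field]
      exact hF.secant_mono hu ht ⟨ht.1.trans hs.1.le, hs.2.le.trans hu.2⟩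
        (ne_of_lt h) (ne_of_lt hs.2) hs.1.le
    have hfin : (F t - F u) / (t - u) ≤ r :=
      ge_of_tendsto htend (eventually_nhdsWithin_of_forall hev)
    have := (div_le_iff_of_neg (by linarith : t - u < 0)).1 hfin
    linarith
  · subst h; simp
  · -- u < t
    have hsub : Ioo u t ⊆ Icc a b \ {u} := fun s hs =>
      ⟨⟨hu.1.trans hs.1.le, hs.2.le.trans ht.2⟩, ne_of_gt hs.1⟩
    have htend : Tendsto (slope F u) (𝓝[Ioo u t] u) (𝓝 r) :=
      hslope.mono_left (nhdsWithin_mono _ hsub)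
    have hne : (𝓝[Ioo u t] u).NeBot := by
      rw [← mem_closure_iff_nhdsWithin_neBot, closure_Ioo (ne_of_lt h)]
      exact ⟨le_rfl, h.le⟩
    have hev : ∀ s ∈ Ioo u t, slope F u s ≤ (F t - F u) / (t - u) := by
      intro s hs
      rw [slope_def_field]
      exact hF.secant_mono hu ⟨hu.1.trans hs.1.le, hs.2.le.trans ht.2⟩ ht
        (ne_of_gt hs.1) (ne_of_gt h) hs.2.le
    have hfin : r ≤ (F t - F u) / (t - u) :=
      le_of_tendsto htend (eventually_nhdsWithin_of_forall hev)
    have := (le_div_iff₀ (by linarith : (0:ℝ) < t - u)).1 hfin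
    linarith





lemma claimY {F φ : ℝ → ℝ} {a b u r n σ : ℝ} (hu : u ∈ Icc a b) (hub : u < b)
    (hFconv : ConvexOn ℝ (Icc a b) F)
    (hFle : ∀ t ∈ Icc a b, F t ≤ φ t)
    (hFge : ∀ c : ℝ → ℝ, ConvexOn ℝ (Icc a b) c → (∀ t ∈ Icc a b, c t ≤ φ t) →
      ∀ t ∈ Icc a b, c t ≤ F t)
    (hd : HasDerivWithinAt F r (Icc a b) u)
    (hn : u < n) (hφσ : ∀ z ∈ Ioc u n, φ z = φ u + σ * (z - u))
    (hφc : ContinuousOn φ (Icc a b)) :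
    ∃ y ∈ Ioc u b, φ y ≤ F u + r * (y - u) := by
  by_contra hcon
  push_neg at hcon
  have hsup : ∀ t ∈ Icc a b, F u + r * (t - u) ≤ F t := support_line hFconv hu hd
  set z₀ := min n b with hz₀def
  have hz₀ : z₀ ∈ Ioc u b := ⟨lt_min hn hub, min_le_right _ _⟩
  have hz₀n : z₀ ≤ n := min_le_left _ _
  have hz₀Icc : z₀ ∈ Icc a b := ⟨hu.1.trans hz₀.1.le, hz₀.2⟩
  set ρ : ℝ → ℝ := fun z => (φ z - (F u + r * (z - u))) / (z - u) with hρdef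
  have hρ_pos : ∀ z ∈ Ioc u b, 0 < ρ z := fun z hz =>
    div_pos (sub_pos.2 (hcon z hz)) (sub_pos.2 hz.1)
  have hcont : ContinuousOn ρ (Icc z₀ b) := by
    apply ContinuousOn.div
    · apply ContinuousOn.sub
      · exact hφc.mono (Icc_subset_Icc hz₀Icc.1 le_rfl)
      · fun_prop
    · fun_prop
    · intro z hz
      have : u < z := hz₀.1.trans_le hz.1
      intro hzz; rw [sub_eq_zero] at hzz; exact absurd hzz (ne_of_gt this)
  obtain ⟨w, hw, hwmin⟩ := isCompact_Icc.exists_isMinOn (nonempty_Icc.2 hz₀.2) hcont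
  set c := min (ρ z₀) (ρ w) with hcdef
  have hwIoc : w ∈ Ioc u b := ⟨hz₀.1.trans_le hw.1, hw.2⟩
  have hc : 0 < c := lt_min (hρ_pos z₀ hz₀) (hρ_pos w hwIoc)
  have hgap : 0 ≤ φ u - F u := sub_nonneg.2 (hFle u hu)
  -- the convex minorant
  set Gc : ℝ → ℝ := fun t => (F u + r * (t - u)) + max (c * (t - u)) 0 with hGcdef
  have hkey : ∀ z ∈ Icc a b, Gc z ≤ φ z := by
    intro z hz
    rcases le_or_gt z u with hzu | hzu
    · have : max (c * (z - u)) 0 = 0 :=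
        max_eq_right (mul_nonpos_of_nonneg_of_nonpos hc.le (by linarith))
      simp only [hGcdef, this, add_zero]
      exact (hsup z hz).trans (hFle z hz)
    · have hmax : max (c * (z - u)) 0 = c * (z - u) :=
        max_eq_left (mul_nonneg hc.le (by linarith))
      have hρz : c ≤ ρ z := by
        rcases le_or_gt z z₀ with hle | hlt
        · have hzIoc : z ∈ Ioc u n := ⟨hzu, hle.trans hz₀n⟩
          have hzu' : z - u ≠ 0 := ne_of_gt (by linarith)
          have hz₀u' : z₀ - u ≠ 0 := ne_of_gt (by linarith [hz₀.1])
          have e1 : ρ z = (φ u - F u) / (z - u) + (σ - r) := by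
            show (φ z - (F u + r * (z - u))) / (z - u) = _
            rw [hφσ z hzIoc]
            field_simp
            ring
          have e2 : ρ z₀ = (φ u - F u) / (z₀ - u) + (σ - r) := by
            show (φ z₀ - (F u + r * (z₀ - u))) / (z₀ - u) = _
            rw [hφσ z₀ ⟨hz₀.1, hz₀n⟩]
            field_simp
            ring
          have hmono : (φ u - F u) / (z₀ - u) ≤ (φ u - F u) / (z - u) :=
            div_le_div_of_nonneg_left hgap (by linarith) (by linarith)
          calc c ≤ ρ z₀ := min_le_left _ _
            _ ≤ ρ z := by rw [e1, e2]; linarith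
        · calc c ≤ ρ w := min_le_right _ _
            _ ≤ ρ z := hwmin ⟨hlt.le, hz.2⟩
      simp only [hGcdef, hmax]
      have := (le_div_iff₀ (by linarith : (0:ℝ) < z - u)).1 hρz
      linarith
  have hGc_conv : ConvexOn ℝ (Icc a b) Gc := by
    have h1 : ConvexOn ℝ (Icc a b)
        ((fun t => (0:ℝ) + c * (t - u)) ⊔ (fun t => (0:ℝ) + 0 * (t - u))) :=
      (convexOn_affine _ (convex_Icc a b) 0 c u).sup (convexOn_affine _ (convex_Icc a b) 0 0 u)
    have h2 : ConvexOn ℝ (Icc a b) (fun t => max (c * (t - u)) 0) := by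
      convert h1 using 1
      funext t
      simp [Pi.sup_apply]
    exact (convexOn_affine _ (convex_Icc a b) (F u) r u).add h2
  have hGcF : ∀ t ∈ Icc a b, Gc t ≤ F t := hFge Gc hGc_conv hkey
  -- derivative contradiction
  have hsub : Ioc u b ⊆ Icc a b \ {u} := fun s hs =>
    ⟨⟨hu.1.trans hs.1.le, hs.2⟩, ne_of_gt hs.1⟩
  have htend : Tendsto (slope F u) (𝓝[Ioc u b] u) (𝓝 r) :=
    (hasDerivWithinAt_iff_tendsto_slope.1 hd).mono_left (nhdsWithin_mono _ hsub)
  have hne : (𝓝[Ioc u b] u).NeBot := by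
    rw [← mem_closure_iff_nhdsWithin_neBot, closure_Ioc (ne_of_lt hub)]
    exact ⟨le_rfl, hub.le⟩
  have hev : ∀ s ∈ Ioc u b, r + c ≤ slope F u s := by
    intro s hs
    rw [slope_def_field]
    have h1 : Gc s ≤ F s := hGcF s ⟨hu.1.trans hs.1.le, hs.2⟩
    have hmax : max (c * (s - u)) 0 = c * (s - u) :=
      max_eq_left (mul_nonneg hc.le (by linarith [hs.1]))
    simp only [hGcdef, hmax] at h1
    rw [le_div_iff₀ (by linarith [hs.1] : (0:ℝ) < s - u)]
    linarith
  have : r + c ≤ r := ge_of_tendsto htend (eventually_nhdsWithin_of_forall hev)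
  linarith






lemma claimX {F φ : ℝ → ℝ} {a b u r n σ : ℝ} (hu : u ∈ Icc a b) (hua : a < u)
    (hFconv : ConvexOn ℝ (Icc a b) F)
    (hFle : ∀ t ∈ Icc a b, F t ≤ φ t)
    (hFge : ∀ c : ℝ → ℝ, ConvexOn ℝ (Icc a b) c → (∀ t ∈ Icc a b, c t ≤ φ t) →
      ∀ t ∈ Icc a b, c t ≤ F t)
    (hd : HasDerivWithinAt F r (Icc a b) u)
    (hn : n < u) (hφσ : ∀ z ∈ Ico n u, φ z = φ u + σ * (z - u))
    (hφc : ContinuousOn φ (Icc a b)) :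
    ∃ x ∈ Ico a u, φ x ≤ F u + r * (x - u) := by
  by_contra hcon
  push_neg at hcon
  have hsup : ∀ t ∈ Icc a b, F u + r * (t - u) ≤ F t := support_line hFconv hu hd
  set z₀ := max n a with hz₀def
  have hz₀ : z₀ ∈ Ico a u := ⟨le_max_right _ _, max_lt hn hua⟩
  have hz₀n : n ≤ z₀ := le_max_left _ _
  have hz₀Icc : z₀ ∈ Icc a b := ⟨hz₀.1, hz₀.2.le.trans hu.2⟩
  set ρ : ℝ → ℝ := fun z => (φ z - (F u + r * (z - u))) / (u - z) with hρdef
  have hρ_pos : ∀ z ∈ Ico a u, 0 < ρ z := fun z hz =>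
    div_pos (sub_pos.2 (hcon z hz)) (sub_pos.2 hz.2)
  have hcont : ContinuousOn ρ (Icc a z₀) := by
    apply ContinuousOn.div
    · apply ContinuousOn.sub
      · exact hφc.mono (Icc_subset_Icc le_rfl hz₀Icc.2)
      · fun_prop
    · fun_prop
    · intro z hz
      have : z < u := lt_of_le_of_lt hz.2 hz₀.2
      intro hzz; rw [sub_eq_zero] at hzz; exact absurd hzz.symm (ne_of_lt this)
  obtain ⟨w, hw, hwmin⟩ := isCompact_Icc.exists_isMinOn (nonempty_Icc.2 hz₀.1) hcont
  set c := min (ρ z₀) (ρ w) with hcdef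
  have hwIco : w ∈ Ico a u := ⟨hw.1, hw.2.trans_lt hz₀.2⟩
  have hc : 0 < c := lt_min (hρ_pos z₀ hz₀) (hρ_pos w hwIco)
  have hgap : 0 ≤ φ u - F u := sub_nonneg.2 (hFle u hu)
  set Gc : ℝ → ℝ := fun t => (F u + r * (t - u)) + max (c * (u - t)) 0 with hGcdef
  have hkey : ∀ z ∈ Icc a b, Gc z ≤ φ z := by
    intro z hz
    rcases le_or_gt u z with hzu | hzu
    · have : max (c * (u - z)) 0 = 0 :=
        max_eq_right (mul_nonpos_of_nonneg_of_nonpos hc.le (by linarith))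
      simp only [hGcdef, this, add_zero]
      exact (hsup z hz).trans (hFle z hz)
    · have hmax : max (c * (u - z)) 0 = c * (u - z) :=
        max_eq_left (mul_nonneg hc.le (by linarith))
      have hρz : c ≤ ρ z := by
        rcases le_or_gt z₀ z with hle | hlt
        · have hzIco : z ∈ Ico n u := ⟨hz₀n.trans hle, hzu⟩
          have hzu' : u - z ≠ 0 := ne_of_gt (by linarith)
          have hz₀u' : u - z₀ ≠ 0 := ne_of_gt (by linarith [hz₀.2])
          have e1 : ρ z = (φ u - F u) / (u - z) - (σ - r) := by
            show (φ z - (F u + r * (z - u))) / (u - z) = _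
            rw [hφσ z hzIco]
            field_simp
            ring
          have e2 : ρ z₀ = (φ u - F u) / (u - z₀) - (σ - r) := by
            show (φ z₀ - (F u + r * (z₀ - u))) / (u - z₀) = _
            rw [hφσ z₀ ⟨hz₀n, hz₀.2⟩]
            field_simp
            ring
          have hmono : (φ u - F u) / (u - z₀) ≤ (φ u - F u) / (u - z) :=
            div_le_div_of_nonneg_left hgap (by linarith) (by linarith)
          calc c ≤ ρ z₀ := min_le_left _ _
            _ ≤ ρ z := by rw [e1, e2]; linarith
        · calc c ≤ ρ w := min_le_right _ _
            _ ≤ ρ z := hwmin ⟨hz.1, hlt.le⟩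
      simp only [hGcdef, hmax]
      have := (le_div_iff₀ (by linarith : (0:ℝ) < u - z)).1 hρz
      linarith
  have hGc_conv : ConvexOn ℝ (Icc a b) Gc := by
    have h1 : ConvexOn ℝ (Icc a b)
        ((fun t => (0:ℝ) + (-c) * (t - u)) ⊔ (fun t => (0:ℝ) + 0 * (t - u))) :=
      (convexOn_affine _ (convex_Icc a b) 0 (-c) u).sup (convexOn_affine _ (convex_Icc a b) 0 0 u)
    have h2 : ConvexOn ℝ (Icc a b) (fun t => max (c * (u - t)) 0) := by
      convert h1 using 1
      funext t
      simp only [Pi.sup_apply]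
      rw [zero_add, zero_add, zero_mul]
      congr 1
      ring
    exact (convexOn_affine _ (convex_Icc a b) (F u) r u).add h2
  have hGcF : ∀ t ∈ Icc a b, Gc t ≤ F t := hFge Gc hGc_conv hkey
  have hsub : Ico a u ⊆ Icc a b \ {u} := fun s hs =>
    ⟨⟨hs.1, hs.2.le.trans hu.2⟩, ne_of_lt hs.2⟩
  have htend : Tendsto (slope F u) (𝓝[Ico a u] u) (𝓝 r) :=
    (hasDerivWithinAt_iff_tendsto_slope.1 hd).mono_left (nhdsWithin_mono _ hsub)
  have hne : (𝓝[Ico a u] u).NeBot := by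
    rw [← mem_closure_iff_nhdsWithin_neBot, closure_Ico (ne_of_lt hua)]
    exact ⟨hua.le, le_rfl⟩
  have hev : ∀ s ∈ Ico a u, slope F u s ≤ r - c := by
    intro s hs
    rw [slope_def_field]
    have h1 : Gc s ≤ F s := hGcF s ⟨hs.1, hs.2.le.trans hu.2⟩
    have hmax : max (c * (u - s)) 0 = c * (u - s) :=
      max_eq_left (mul_nonneg hc.le (by linarith [hs.2]))
    simp only [hGcdef, hmax] at h1
    rw [div_le_iff_of_neg (by linarith [hs.2] : s - u < 0)]
    linarith
  have : r ≤ r - c := le_of_tendsto htend (eventually_nhdsWithin_of_forall hev)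
  linarith






lemma pwAffine_sub (ε : ℝ) (f g : ℝ → ℝ) (x : ℝ) :
    pwAffine ε (fun t => f t - g t) x = pwAffine ε f x - pwAffine ε g x := by
  simp only [pwAffine]; ring

lemma pwAffine_affine_between {ε : ℝ} (hε : 0 < ε) (F : ℝ → ℝ) (m : ℤ) {z u : ℝ}
    (hz1 : (m : ℝ) * ε ≤ z) (hz2 : z ≤ ((m : ℝ) + 1) * ε)
    (hu1 : (m : ℝ) * ε ≤ u) (hu2 : u ≤ ((m : ℝ) + 1) * ε) :
    pwAffine ε F z
      = pwAffine ε F u + ((F (((m : ℝ) + 1) * ε) - F ((m : ℝ) * ε)) / ε) * (z - u) := by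
  rw [pwAffine_cell hε F m hz1 hz2, pwAffine_cell hε F m hu1 hu2]
  field_simp
  ring

lemma cellBound (f : ℝ → ℝ) (hf : Differentiable ℝ f) {K ε : ℝ} (hε : 0 < ε) (m : ℤ)
    (hbound : ∀ x ∈ Icc ((m : ℝ) * ε) (((m : ℝ) + 1) * ε), |deriv f x| ≤ K) :
    |f (((m : ℝ) + 1) * ε) - f ((m : ℝ) * ε)| ≤ K * ε := by
  have hlt : (m : ℝ) * ε < ((m : ℝ) + 1) * ε := by nlinarith
  obtain ⟨ξ, hξ, hslope⟩ := exists_hasDerivAt_eq_slope f (deriv f) hlt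
    hf.continuous.continuousOn (fun x _ => (hf x).hasDerivAt)
  have h2 : ((m : ℝ) + 1) * ε - (m : ℝ) * ε = ε := by ring
  rw [h2] at hslope
  have h3 : f (((m : ℝ) + 1) * ε) - f ((m : ℝ) * ε) = deriv f ξ * ε := by
    rw [hslope]; field_simp
  rw [h3, abs_mul, abs_of_pos hε]
  exact mul_le_mul_of_nonneg_right (hbound ξ (Ioo_subset_Icc_self hξ)) hε.le

lemma contOn_of_pairs {φ : ℝ → ℝ} {K : ℝ} {s : Set ℝ} (hK : 0 ≤ K)
    (h : ∀ x ∈ s, ∀ y ∈ s, x ≤ y → |φ y - φ x| ≤ K * (y - x)) : ContinuousOn φ s := by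
  have hl : LipschitzOnWith K.toNNReal φ s := by
    rw [lipschitzOnWith_iff_dist_le_mul]
    intro x hx y hy
    rw [Real.dist_eq, Real.dist_eq, Real.coe_toNNReal _ hK]
    rcases le_total x y with hxy | hxy
    · rw [abs_sub_comm (φ x), abs_sub_comm x, abs_of_nonneg (by linarith : (0:ℝ) ≤ y - x)]
      exact h x hx y hy hxy
    · rw [abs_of_nonneg (by linarith : (0:ℝ) ≤ x - y)]
      exact h y hy x hx hxy
  exact hl.continuousOn

lemma oneSide (f g : ℝ → ℝ) (ε a b M : ℝ) (p q : ℤ)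
    (hf : ContDiff ℝ 1 f) (hg : ContDiff ℝ 1 g) (hε : 0 < ε)
    (ha : a = p * ε) (hb : b = q * ε) (hab : a < b)
    (hM : ∀ x : ℝ, |deriv f x - deriv g x| ≤ M)
    (u : ℝ) (hu : u ∈ Icc a b)
    (hdF : DifferentiableWithinAt ℝ (convEnv (pwAffine ε f) a b) (Set.Icc a b) u)
    (hdG : DifferentiableWithinAt ℝ (convEnv (pwAffine ε g) a b) (Set.Icc a b) u) :
    -M ≤ derivWithin (convEnv (pwAffine ε f) a b) (Set.Icc a b) u -
      derivWithin (convEnv (pwAffine ε g) a b) (Set.Icc a b) u := by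
  have hM0 : 0 ≤ M := le_trans (abs_nonneg _) (hM 0)
  set φ := pwAffine ε f with hφdef
  set ψ := pwAffine ε g with hψdef
  set F := convEnv φ a b with hFdef
  set G := convEnv ψ a b with hGdef
  set r := derivWithin F (Icc a b) u with hrdef
  set s := derivWithin G (Icc a b) u with hsdef
  have hfd : Differentiable ℝ f := hf.differentiable one_ne_zero
  have hgd : Differentiable ℝ g := hg.differentiable one_ne_zero
  have hne : (Icc a b).Nonempty := nonempty_Icc.2 hab.le
  obtain ⟨ξf, hξfm, hξf⟩ := isCompact_Icc.exists_isMaxOn hne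
    ((hf.continuous_deriv le_rfl).abs.continuousOn)
  obtain ⟨ξg, hξgm, hξg⟩ := isCompact_Icc.exists_isMaxOn hne
    ((hg.continuous_deriv le_rfl).abs.continuousOn)
  set Kf := |deriv f ξf| with hKfdef
  set Kg := |deriv g ξg| with hKgdef
  have hKf0 : 0 ≤ Kf := abs_nonneg _
  have hKg0 : 0 ≤ Kg := abs_nonneg _
  have hcellIcc : ∀ m : ℤ, p ≤ m → m < q →
      Icc ((m : ℝ) * ε) (((m : ℝ) + 1) * ε) ⊆ Icc a b := by
    intro m h1 h2 x hx
    have hc1 : (p : ℝ) ≤ (m : ℝ) := by exact_mod_cast h1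
    have hc2 : (m : ℝ) + 1 ≤ (q : ℝ) := by exact_mod_cast h2
    constructor
    · calc a = (p : ℝ) * ε := ha
        _ ≤ (m : ℝ) * ε := by nlinarith
        _ ≤ x := hx.1
    · calc x ≤ ((m : ℝ) + 1) * ε := hx.2
        _ ≤ (q : ℝ) * ε := by nlinarith
        _ = b := hb.symm
  have hcf : ∀ m : ℤ, p ≤ m → m < q →
      |f (((m : ℝ) + 1) * ε) - f ((m : ℝ) * ε)| ≤ Kf * ε := fun m h1 h2 =>
    cellBound f hfd hε m (fun x hx => hξf (hcellIcc m h1 h2 hx))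
  have hcg : ∀ m : ℤ, p ≤ m → m < q →
      |g (((m : ℝ) + 1) * ε) - g ((m : ℝ) * ε)| ≤ Kg * ε := fun m h1 h2 =>
    cellBound g hgd hε m (fun x hx => hξg (hcellIcc m h1 h2 hx))
  have hch : ∀ m : ℤ, p ≤ m → m < q →
      |(fun t => f t - g t) (((m : ℝ) + 1) * ε) - (fun t => f t - g t) ((m : ℝ) * ε)| ≤ M * ε := by
    intro m h1 h2
    refine cellBound _ (hfd.sub hgd) hε m (fun x hx => ?_)
    rw [deriv_sub (hfd x) (hgd x)]
    exact hM x
  have hφlip : ∀ x ∈ Icc a b, ∀ y ∈ Icc a b, x ≤ y → |φ y - φ x| ≤ Kf * (y - x) := by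
    have := pwAffine_lip hε f p q hcf
    rw [← ha, ← hb] at this
    exact this
  have hψlip : ∀ x ∈ Icc a b, ∀ y ∈ Icc a b, x ≤ y → |ψ y - ψ x| ≤ Kg * (y - x) := by
    have := pwAffine_lip hε g p q hcg
    rw [← ha, ← hb] at this
    exact this
  have hhlip : ∀ x ∈ Icc a b, ∀ y ∈ Icc a b, x ≤ y →
      |(φ y - ψ y) - (φ x - ψ x)| ≤ M * (y - x) := by
    have := pwAffine_lip (K := M) hε (fun t => f t - g t) p q hch
    rw [← ha, ← hb] at this
    intro x hx y hy hxy
    have h2 := this x hx y hy hxy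
    rw [pwAffine_sub, pwAffine_sub] at h2
    exact h2
  have hφcont : ContinuousOn φ (Icc a b) := contOn_of_pairs hKf0 hφlip
  have hψcont : ContinuousOn ψ (Icc a b) := contOn_of_pairs hKg0 hψlip
  -- minorants
  set c₀f : ℝ → ℝ := fun t => φ a + (-Kf) * (t - a) with hc₀fdef
  have hc₀f_conv : ConvexOn ℝ (Icc a b) c₀f := convexOn_affine _ (convex_Icc a b) (φ a) (-Kf) a
  have hc₀f_le : ∀ t ∈ Icc a b, c₀f t ≤ φ t := by
    intro t ht
    have h1 := hφlip a ⟨le_rfl, hab.le⟩ t ht ht.1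
    have h2 := (abs_le.1 h1).2
    simp only [hc₀fdef]
    nlinarith [(abs_le.1 h1).1]
  set c₀g : ℝ → ℝ := fun t => ψ a + (-Kg) * (t - a) with hc₀gdef
  have hc₀g_conv : ConvexOn ℝ (Icc a b) c₀g := convexOn_affine _ (convex_Icc a b) (ψ a) (-Kg) a
  have hc₀g_le : ∀ t ∈ Icc a b, c₀g t ≤ ψ t := by
    intro t ht
    have h1 := hψlip a ⟨le_rfl, hab.le⟩ t ht ht.1
    simp only [hc₀gdef]
    nlinarith [(abs_le.1 h1).1]
  -- envelope facts
  have hFconv : ConvexOn ℝ (Icc a b) F := env_convex c₀f hc₀f_conv hc₀f_le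
  have hGconv : ConvexOn ℝ (Icc a b) G := env_convex c₀g hc₀g_conv hc₀g_le
  have hFle : ∀ t ∈ Icc a b, F t ≤ φ t := fun t ht => env_le_s18 c₀f hc₀f_conv hc₀f_le ht
  have hGle : ∀ t ∈ Icc a b, G t ≤ ψ t := fun t ht => env_le_s18 c₀g hc₀g_conv hc₀g_le ht
  have hFge : ∀ c : ℝ → ℝ, ConvexOn ℝ (Icc a b) c → (∀ t ∈ Icc a b, c t ≤ φ t) →
      ∀ t ∈ Icc a b, c t ≤ F t := fun c hc hle t ht => env_ge c hc hle ht
  have hGge : ∀ c : ℝ → ℝ, ConvexOn ℝ (Icc a b) c → (∀ t ∈ Icc a b, c t ≤ ψ t) →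
      ∀ t ∈ Icc a b, c t ≤ G t := fun c hc hle t ht => env_ge c hc hle ht
  have hdF' : HasDerivWithinAt F r (Icc a b) u := hdF.hasDerivWithinAt
  have hdG' : HasDerivWithinAt G s (Icc a b) u := hdG.hasDerivWithinAt
  have hFs : ∀ t ∈ Icc a b, F u + r * (t - u) ≤ F t := support_line hFconv hu hdF'
  have hGs : ∀ t ∈ Icc a b, G u + s * (t - u) ≤ G t := support_line hGconv hu hdG'
  -- reduce to existence of contact points
  suffices hfin : ∃ x y : ℝ, x ∈ Icc a b ∧ y ∈ Icc a b ∧ x ≤ u ∧ u ≤ y ∧ x < y ∧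
      φ y ≤ F u + r * (y - u) ∧ ψ x ≤ G u + s * (x - u) by
    obtain ⟨x, y, hxI, hyI, hxu, huy, hxy, h1, h4⟩ := hfin
    have h2 : G u + s * (y - u) ≤ ψ y := (hGs y hyI).trans (hGle y hyI)
    have h3 : F u + r * (x - u) ≤ φ x := (hFs x hxI).trans (hFle x hxI)
    have habs := hhlip x hxI y hyI hxy.le
    have hlow : -(M * (y - x)) ≤ (φ y - ψ y) - (φ x - ψ x) := (abs_le.1 habs).1
    have hexp : (F u + r * (y - u) - (G u + s * (y - u))) -
        ((F u + r * (x - u)) - (G u + s * (x - u))) = (r - s) * (y - x) := by ring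
    have hcomb : (-M) * (y - x) ≤ (r - s) * (y - x) := by nlinarith
    have hyx : (0:ℝ) < y - x := by linarith
    have := le_of_mul_le_mul_right hcomb hyx
    linarith
  -- construct the contact points
  rcases lt_or_eq_of_le hu.2 with hub | hub
  · -- u < b : get y from claimY
    have hmfl1 : ((⌊u / ε⌋ : ℝ)) * ε ≤ u := (le_div_iff₀ hε).1 (Int.floor_le _)
    have hmfl2 : u < ((⌊u / ε⌋ : ℝ) + 1) * ε := by
      have := Int.lt_floor_add_one (u / ε)
      have := (div_lt_iff₀ hε).1 this
      linarith
    have hφσ : ∀ z ∈ Ioc u (((⌊u / ε⌋ : ℝ) + 1) * ε),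
        φ z = φ u + ((f (((⌊u / ε⌋ : ℝ) + 1) * ε) - f ((⌊u / ε⌋ : ℝ) * ε)) / ε) * (z - u) := by
      intro z hz
      exact pwAffine_affine_between hε f ⌊u / ε⌋ (hmfl1.trans hz.1.le) hz.2 hmfl1 hmfl2.le
    obtain ⟨y, hyIoc, hyφ⟩ := claimY hu hub hFconv hFle hFge hdF' hmfl2 hφσ hφcont
    have hyI : y ∈ Icc a b := ⟨hu.1.trans hyIoc.1.le, hyIoc.2⟩
    rcases lt_or_eq_of_le hu.1 with hua | hua
    · -- a < u : get x from claimX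
      have hmc1 : ((⌈u / ε⌉ : ℝ) - 1) * ε < u := by
        have h1 : ((⌈u / ε⌉ : ℝ)) < u / ε + 1 := Int.ceil_lt_add_one _
        have h2 : ((⌈u / ε⌉ : ℝ) - 1) < u / ε := by linarith
        linarith [(lt_div_iff₀ hε).1 h2]
      have hmc2 : u ≤ ((⌈u / ε⌉ : ℝ)) * ε := (div_le_iff₀ hε).1 (Int.le_ceil _)
      have hcast : ∀ w : ℝ, ((⌈u / ε⌉ - 1 : ℤ) : ℝ) = (⌈u / ε⌉ : ℝ) - 1 := by
        intro w; push_cast; ring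
      have hψσ : ∀ z ∈ Ico (((⌈u / ε⌉ : ℝ) - 1) * ε) u,
          ψ z = ψ u + ((g ((((⌈u / ε⌉ : ℝ) - 1) + 1) * ε) - g (((⌈u / ε⌉ : ℝ) - 1) * ε)) / ε)
            * (z - u) := by
        intro z hz
        have e1 : (((⌈u / ε⌉ - 1 : ℤ)) : ℝ) = (⌈u / ε⌉ : ℝ) - 1 := by push_cast; ring
        have := pwAffine_affine_between hε g (⌈u / ε⌉ - 1) (z := z) (u := u)
          (by rw [e1]; exact hz.1) (by rw [e1]; ring_nf; ring_nf at hmc2; linarith [hz.2, hmc2])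
          (by rw [e1]; exact hmc1.le) (by rw [e1]; ring_nf; ring_nf at hmc2; linarith)
        rw [e1] at this
        exact this
      obtain ⟨x, hxIco, hxψ⟩ := claimX hu hua hGconv hGle hGge hdG' hmc1 hψσ hψcont
      exact ⟨x, y, ⟨hxIco.1, hxIco.2.le.trans hu.2⟩, hyI, hxIco.2.le, hyIoc.1.le,
        hxIco.2.trans hyIoc.1, hyφ, hxψ⟩
    · -- u = a : x = u with contact ψ a ≤ G a
      have hcontact : ψ u ≤ G u := by
        have := hGge c₀g hc₀g_conv hc₀g_le u hu
        simp only [hc₀gdef] at this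
        rw [hua] at this
        simpa using this
      exact ⟨u, y, hu, hyI, le_rfl, hyIoc.1.le, hyIoc.1, hyφ, by simpa using hcontact⟩
  · -- u = b : y = u with contact φ b ≤ F b, x from claimX
    have hua : a < u := by rw [hub]; exact hab
    have hmc1 : ((⌈u / ε⌉ : ℝ) - 1) * ε < u := by
      have h1 : ((⌈u / ε⌉ : ℝ)) < u / ε + 1 := Int.ceil_lt_add_one _
      have h2 : ((⌈u / ε⌉ : ℝ) - 1) < u / ε := by linarith
      linarith [(lt_div_iff₀ hε).1 h2]
    have hmc2 : u ≤ ((⌈u / ε⌉ : ℝ)) * ε := (div_le_iff₀ hε).1 (Int.le_ceil _)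
    have hψσ : ∀ z ∈ Ico (((⌈u / ε⌉ : ℝ) - 1) * ε) u,
        ψ z = ψ u + ((g ((((⌈u / ε⌉ : ℝ) - 1) + 1) * ε) - g (((⌈u / ε⌉ : ℝ) - 1) * ε)) / ε)
          * (z - u) := by
      intro z hz
      have e1 : (((⌈u / ε⌉ - 1 : ℤ)) : ℝ) = (⌈u / ε⌉ : ℝ) - 1 := by push_cast; ring
      have := pwAffine_affine_between hε g (⌈u / ε⌉ - 1) (z := z) (u := u)
        (by rw [e1]; exact hz.1) (by rw [e1]; ring_nf; ring_nf at hmc2; linarith [hz.2, hmc2])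
        (by rw [e1]; exact hmc1.le) (by rw [e1]; ring_nf; ring_nf at hmc2; linarith)
      rw [e1] at this
      exact this
    obtain ⟨x, hxIco, hxψ⟩ := claimX hu hua hGconv hGle hGge hdG' hmc1 hψσ hψcont
    have hcontact : φ u ≤ F u := by
      set cb : ℝ → ℝ := fun t => φ b + Kf * (t - b) with hcbdef
      have hcb_conv : ConvexOn ℝ (Icc a b) cb := convexOn_affine _ (convex_Icc a b) (φ b) Kf b
      have hcb_le : ∀ t ∈ Icc a b, cb t ≤ φ t := by
        intro t ht
        have h1 := hφlip t ht b ⟨hab.le, le_rfl⟩ ht.2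
        simp only [hcbdef]
        nlinarith [(abs_le.1 h1).2]
      have := hFge cb hcb_conv hcb_le u hu
      simp only [hcbdef] at this
      rw [hub] at this ⊢
      simpa using this
    exact ⟨x, u, ⟨hxIco.1, hxIco.2.le.trans hu.2⟩, hu, hxIco.2.le, le_rfl, hxIco.2,
      by simpa using hcontact, hxψ⟩


end CEaux



theorem convEnv_pwAffine_deriv_diff_le (f g : ℝ → ℝ) (ε a b M : ℝ)
    (p q : ℤ) (hf : ContDiff ℝ 1 f) (hg : ContDiff ℝ 1 g) (hε : 0 < ε)
    (ha : a = p * ε) (hb : b = q * ε) (hab : a < b)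
    (hM : ∀ x : ℝ, |deriv f x - deriv g x| ≤ M) :
    ∀ u ∈ Set.Icc a b,
      DifferentiableWithinAt ℝ (convEnv (pwAffine ε f) a b) (Set.Icc a b) u →
      DifferentiableWithinAt ℝ (convEnv (pwAffine ε g) a b) (Set.Icc a b) u →
      |derivWithin (convEnv (pwAffine ε f) a b) (Set.Icc a b) u -
        derivWithin (convEnv (pwAffine ε g) a b) (Set.Icc a b) u| ≤ M := by
  intro u hu hdF hdG
  have h1 := CEaux.oneSide f g ε a b M p q hf hg hε ha hb hab hM u hu hdF hdG
  have h2 := CEaux.oneSide g f ε a b M p q hg hf hε ha hb hab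
    (fun x => by rw [abs_sub_comm]; exact hM x) u hu hdG hdF
  rw [abs_le]
  constructor <;> linarith
end
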